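/- arXiv:2302.11067 — 11 statements merged into one kernel-verified Lean document; each statement's English description precedes it below -/
import Mathlib

section
/- The chip-pushing process terminates: for every natural number N there exists a bound b_N such that starting from any configuration of N violinists (a finite multiset of integer positions), at most b_N moves can be performed, where a move takes two violinists in adjacent rooms i and i+1 and sends one to the nearest unoccupied room to the left of i and the other to the nearest unoccupied room to the right of i+1. -/
/-- A two-sided dispersion move on single-occupancy states (finite sets of occupied rooms):
violinists in adjacent rooms `i` and `i+1` move to the nearest unoccupied rooms
`i - ℓ` (on the left) and `i + 1 + r` (on the right). -/
def FMove (S T : Finset ℤ) : Prop :=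
  ∃ i ℓ r : ℤ, 1 ≤ ℓ ∧ 1 ≤ r ∧ i ∈ S ∧ i + 1 ∈ S ∧
    (∀ j : ℤ, 1 ≤ j → j < ℓ → i - j ∈ S) ∧ i - ℓ ∉ S ∧
    (∀ j : ℤ, 2 ≤ j → j ≤ r → i + j ∈ S) ∧ i + 1 + r ∉ S ∧
    T = insert (i - ℓ) (insert (i + 1 + r) ((S.erase i).erase (i + 1)))

/-- Reachability by a sequence of moves. -/
def FReaches : Finset ℤ → Finset ℤ → Prop := Relation.ReflTransGen FMove

/-- A final state: no move is possible. -/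
def FIsFinal (S : Finset ℤ) : Prop := ¬ ∃ T, FMove S T

/-- The centroid of a state: the average of the occupied room numbers. -/
noncomputable def centroidF (S : Finset ℤ) : ℚ := (∑ x ∈ S, (x : ℚ)) / S.card

/-- The shadow `F_{N,k}` with leftmost violinist at `p`: occupied rooms
`p, p+2, ..., p+2(k-1), p+2k+1, p+2k+3, ..., p+2N-1`. -/
def shadow (N k : ℕ) (p : ℤ) : Finset ℤ :=
  (Finset.range N).image fun j => if j < k then p + 2 * j else p + 2 * j + 1

namespace MB
open Finset

lemma card_move {S T : Finset ℤ} (h : FMove S T) : T.card = S.card := by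
  obtain ⟨i, ℓ, r, hℓ, hr, hi, hi1, hLblk, hLout, hRblk, hRout, hT⟩ := h
  have h1 : i + 1 ∈ S.erase i := by
    rw [Finset.mem_erase]; exact ⟨by omega, hi1⟩
  have hne : i - ℓ ≠ i + 1 + r := by omega
  have hnotl : (i - ℓ) ∉ (S.erase i).erase (i+1) := fun hc => hLout (Finset.mem_of_mem_erase (Finset.mem_of_mem_erase hc))
  have hnotr : (i + 1 + r) ∉ (S.erase i).erase (i+1) := fun hc => hRout (Finset.mem_of_mem_erase (Finset.mem_of_mem_erase hc))
  have hnotl' : (i - ℓ) ∉ insert (i+1+r) ((S.erase i).erase (i+1)) := by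
    rw [Finset.mem_insert]
    rintro (hc | hc)
    · exact hne hc
    · exact hnotl hc
  have hc2 : 2 ≤ S.card := by
    have : ({i, i+1} : Finset ℤ) ⊆ S := by
      intro x hx; rcases Finset.mem_insert.1 hx with h | h
      · subst h; exact hi
      · rw [Finset.mem_singleton] at h; subst h; exact hi1
    have := Finset.card_le_card this
    simpa [Finset.card_insert_of_notMem, show i ∉ ({i+1} : Finset ℤ) by simp only [Finset.mem_singleton]; omega] using this
  rw [hT, Finset.card_insert_of_notMem hnotl', Finset.card_insert_of_notMem hnotr,
    Finset.card_erase_of_mem h1, Finset.card_erase_of_mem hi]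
  omega


lemma strictMono_of_lt_succ {N : ℕ} {f : Fin N → ℤ}
    (h : ∀ v (h1 : v < N) (h2 : v + 1 < N), f ⟨v, h1⟩ < f ⟨v + 1, h2⟩) : StrictMono f := by
  have key : ∀ (d v : ℕ) (h1 : v < N) (h2 : v + d + 1 < N), f ⟨v, h1⟩ < f ⟨v + d + 1, h2⟩ := by
    intro d
    induction d with
    | zero => intro v h1 h2; exact h v h1 h2
    | succ d ih =>
      intro v h1 h2
      exact lt_trans (ih v h1 (by omega)) (h (v + d + 1) (by omega) h2)
  intro a b hab
  obtain ⟨d, hd⟩ : ∃ d, (b : ℕ) = (a : ℕ) + d + 1 := ⟨(b : ℕ) - (a : ℕ) - 1, by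
    have := (Fin.lt_def).1 hab; omega⟩
  have h2 : (a : ℕ) + d + 1 < N := by rw [← hd]; exact b.isLt
  have hk := key d a.1 a.isLt h2
  have ha : (⟨(a : ℕ), a.isLt⟩ : Fin N) = a := rfl
  have hb : (⟨(a : ℕ) + d + 1, h2⟩ : Fin N) = b := by
    apply Fin.ext; simp [hd]
  rwa [ha, hb] at hk


lemma master {S T : Finset ℤ} {N : ℕ} (hS : S.card = N) (hT : T.card = N)
    (hmv : FMove S T) :
    ∃ (k0 L R : ℕ) (c : ℤ), 1 ≤ L ∧ 1 ≤ R ∧ k0 + L + R ≤ N ∧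
      (∀ s : ℕ, (hsN : k0 + s < N) → s < L + R →
        S.orderEmbOfFin hS ⟨k0 + s, hsN⟩ = c + s) ∧
      (∀ j : Fin N, T.orderEmbOfFin hT j = S.orderEmbOfFin hS j +
        (if (j : ℕ) < k0 then 0 else if (j : ℕ) < k0 + L then -1
         else if (j : ℕ) < k0 + L + R then 1 else 0)) := by
  obtain ⟨i, ℓ, r, hℓ, hr, hi, hi1, hLblk, hLout, hRblk, hRout, hTdef⟩ := hmv
  set e := S.orderEmbOfFin hS with he
  have hLz : ((ℓ.toNat : ℤ)) = ℓ := Int.toNat_of_nonneg (by omega)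
  have hRz : ((r.toNat : ℤ)) = r := Int.toNat_of_nonneg (by omega)
  set L := ℓ.toNat with hLdef
  set R := r.toNat with hRdef
  have hL1 : 1 ≤ L := by omega
  have hR1 : 1 ≤ R := by omega
  set c : ℤ := i - ℓ + 1 with hc
  have hblk : ∀ s : ℕ, s < L + R → c + s ∈ S := by
    intro s hs
    rcases lt_trichotomy ((s : ℤ)) (ℓ - 1) with h1 | h1 | h1
    · have h2 := hLblk (ℓ - 1 - s) (by omega) (by omega)
      have hx : c + (s : ℤ) = i - (ℓ - 1 - s) := by omega
      rw [hx]; exact h2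
    · have hx : c + (s : ℤ) = i := by omega
      rw [hx]; exact hi
    · by_cases h2 : (s : ℤ) = ℓ
      · have hx : c + (s : ℤ) = i + 1 := by omega
        rw [hx]; exact hi1
      · have h3 := hRblk ((s : ℤ) - ℓ + 1) (by omega) (by omega)
        have hx : c + (s : ℤ) = i + ((s : ℤ) - ℓ + 1) := by omega
        rw [hx]; exact h3
  set k0 := (S.filter (fun y => y < c)).card with hk0
  have hcardA : (univ.filter (fun j : Fin N => e j < c)).card = k0 := by
    rw [hk0]
    apply Finset.card_bij (fun j _ => e j)
    · intro a ha
      simp only [Finset.mem_filter, Finset.mem_univ, true_and] at ha ⊢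
      exact ⟨S.orderEmbOfFin_mem hS a, ha⟩
    · intro a _ b _ hab
      exact (S.orderEmbOfFin hS).injective hab
    · intro y hy
      simp only [Finset.mem_filter] at hy
      obtain ⟨j, hj⟩ : ∃ j, e j = y := by
        have hry : y ∈ Set.range e := by rw [he, Finset.range_orderEmbOfFin]; exact_mod_cast hy.1
        exact hry
      exact ⟨j, by simp only [Finset.mem_filter, Finset.mem_univ, true_and]; rw [hj]; exact hy.2, hj⟩
  have claim0 : ∀ j : Fin N, e j < c ↔ (j : ℕ) < k0 := by
    intro j
    constructor
    · intro hj
      have hsub : Finset.Iic j ⊆ univ.filter (fun a : Fin N => e a < c) := by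
        intro a ha
        simp only [Finset.mem_Iic] at ha
        simp only [Finset.mem_filter, Finset.mem_univ, true_and]
        exact lt_of_le_of_lt ((S.orderEmbOfFin hS).monotone ha) hj
      have hle := Finset.card_le_card hsub
      rw [Fin.card_Iic, hcardA] at hle
      omega
    · intro hj
      by_contra hcon
      push_neg at hcon
      have hsub : univ.filter (fun a : Fin N => e a < c) ⊆ Finset.Iio j := by
        intro a ha
        simp only [Finset.mem_filter, Finset.mem_univ, true_and] at ha
        simp only [Finset.mem_Iio]
        by_contra h2
        push_neg at h2
        exact absurd (lt_of_le_of_lt ((S.orderEmbOfFin hS).monotone h2) ha) (not_lt.2 hcon)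
      have hle := Finset.card_le_card hsub
      rw [Fin.card_Iio, hcardA] at hle
      omega
  have hcount : k0 + L + R ≤ N := by
    have hinj : Function.Injective (fun s : ℕ => c + (s : ℤ)) := by
      intro a b hab
      simp only at hab
      omega
    have hBcard : ((Finset.range (L + R)).image (fun s : ℕ => c + (s : ℤ))).card = L + R := by
      rw [Finset.card_image_of_injective _ hinj, Finset.card_range]
    have hdisj : Disjoint (S.filter (fun y => y < c))
        ((Finset.range (L + R)).image (fun s : ℕ => c + (s : ℤ))) := by
      rw [Finset.disjoint_left]
      intro x hx hx2
      simp only [Finset.mem_image, Finset.mem_range] at hx2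
      obtain ⟨s, _, rfl⟩ := hx2
      simp only [Finset.mem_filter] at hx
      omega
    have hsub : (S.filter (fun y => y < c)) ∪
        ((Finset.range (L + R)).image (fun s : ℕ => c + (s : ℤ))) ⊆ S := by
      intro x hx
      rcases Finset.mem_union.1 hx with h | h
      · exact Finset.mem_of_mem_filter _ h
      · simp only [Finset.mem_image, Finset.mem_range] at h
        obtain ⟨s, hs, rfl⟩ := h
        exact hblk s hs
    have hle := Finset.card_le_card hsub
    rw [Finset.card_union_of_disjoint hdisj, hBcard, hS] at hle
    omega
  have claim1 : ∀ s : ℕ, (hsN : k0 + s < N) → s < L + R → e ⟨k0 + s, hsN⟩ = c + s := by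
    intro s
    induction s with
    | zero =>
      intro hsN _
      have h1 : ¬ e ⟨k0 + 0, hsN⟩ < c := by rw [claim0]; simp
      have h2 : c ∈ S := by have := hblk 0 (by omega); simpa using this
      obtain ⟨a, ha⟩ : ∃ a : Fin N, e a = c := by
        have hrc : c ∈ Set.range e := by rw [he, Finset.range_orderEmbOfFin]; exact_mod_cast h2
        exact hrc
      have h3 : ¬ ((a : ℕ) < k0) := by rw [← claim0]; omega
      have h4 : e ⟨k0 + 0, hsN⟩ ≤ e a := by
        apply (S.orderEmbOfFin hS).monotone
        simp only [Fin.le_def]; omega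
      push_cast
      omega
    | succ s ih =>
      intro hsN hs
      have hsN' : k0 + s < N := by omega
      have hv := ih hsN' (by omega)
      have h2 : c + (s : ℤ) + 1 ∈ S := by
        have hb := hblk (s + 1) hs
        have hx : c + ((s + 1 : ℕ) : ℤ) = c + (s : ℤ) + 1 := by push_cast; ring
        rwa [hx] at hb
      obtain ⟨a, ha⟩ : ∃ a : Fin N, e a = c + (s : ℤ) + 1 := by
        have hrc : c + (s : ℤ) + 1 ∈ Set.range e := by
          rw [he, Finset.range_orderEmbOfFin]; exact_mod_cast h2
        exact hrc
      have h3 : k0 + s < (a : ℕ) := by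
        by_contra hcon
        push_neg at hcon
        have h5 : e a ≤ e ⟨k0 + s, hsN'⟩ := by
          apply (S.orderEmbOfFin hS).monotone
          simp only [Fin.le_def]; omega
        omega
      have h4 : e ⟨k0 + (s + 1), hsN⟩ ≤ e a := by
        apply (S.orderEmbOfFin hS).monotone
        simp only [Fin.le_def]; omega
      have h5 : e ⟨k0 + s, hsN'⟩ < e ⟨k0 + (s + 1), hsN⟩ := by
        apply (S.orderEmbOfFin hS).strictMono
        simp only [Fin.lt_def]; omega
      push_cast
      omega
  have claim2 : ∀ j : Fin N, k0 + L + R ≤ (j : ℕ) → i + r + 2 ≤ e j := by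
    intro j hj
    have hidx : k0 + (L + R - 1) < N := by omega
    have htop : e ⟨k0 + (L + R - 1), hidx⟩ = c + ((L + R - 1 : ℕ) : ℤ) :=
      claim1 _ hidx (by omega)
    have h5 : e ⟨k0 + (L + R - 1), hidx⟩ < e j := by
      apply (S.orderEmbOfFin hS).strictMono
      simp only [Fin.lt_def]; omega
    have hne : e j ≠ i + 1 + r := by
      intro hcon
      exact hRout (hcon ▸ S.orderEmbOfFin_mem hS j)
    omega
  have hmemT' : ∀ x : ℤ, x ∈ S → x ≠ i → x ≠ i + 1 → x ∈ T := by
    intro x hx h1 h2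
    rw [hTdef]
    simp only [Finset.mem_insert, Finset.mem_erase]
    exact Or.inr (Or.inr ⟨h2, h1, hx⟩)
  have hlT : i - ℓ ∈ T := by rw [hTdef]; simp
  have hrT : i + 1 + r ∈ T := by rw [hTdef]; simp
  set δ : ℕ → ℤ := fun v => if v < k0 then 0 else if v < k0 + L then -1
    else if v < k0 + L + R then 1 else 0 with hδ
  set f : Fin N → ℤ := fun j => e j + δ (j : ℕ) with hf
  have hδ0 : ∀ v, v < k0 → δ v = 0 := by intro v hv; simp only [hδ]; rw [if_pos hv]
  have hδ1 : ∀ v, k0 ≤ v → v < k0 + L → δ v = -1 := by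
    intro v h1 h2; simp only [hδ]; rw [if_neg (by omega), if_pos (by omega)]
  have hδ2 : ∀ v, k0 + L ≤ v → v < k0 + L + R → δ v = 1 := by
    intro v h1 h2; simp only [hδ]; rw [if_neg (by omega), if_neg (by omega), if_pos (by omega)]
  have hδ3 : ∀ v, k0 + L + R ≤ v → δ v = 0 := by
    intro v h1; simp only [hδ]; rw [if_neg (by omega), if_neg (by omega), if_neg (by omega)]
  have hev : ∀ j : Fin N, k0 ≤ (j : ℕ) → (j : ℕ) < k0 + L + R →
      e j = c + (((j : ℕ) - k0 : ℕ) : ℤ) := by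
    intro j h1 h2
    have hsN : k0 + ((j : ℕ) - k0) < N := by omega
    have hcl := claim1 ((j : ℕ) - k0) hsN (by omega)
    have hje : j = (⟨k0 + ((j : ℕ) - k0), hsN⟩ : Fin N) := by
      apply Fin.ext; simp; omega
    rw [show e j = e ⟨k0 + ((j : ℕ) - k0), hsN⟩ from congrArg e hje]
    exact hcl
  have hlow : ∀ j : Fin N, (j : ℕ) < k0 → e j ≤ i - ℓ - 1 := by
    intro j hj
    have h1 : e j < c := (claim0 j).2 hj
    have h2 : e j ≠ i - ℓ := by
      intro hcon
      exact hLout (hcon ▸ S.orderEmbOfFin_mem hS j)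
    omega
  have hmem : ∀ j : Fin N, f j ∈ T := by
    intro j
    have hfj : f j = e j + δ (j : ℕ) := rfl
    rcases lt_or_ge (j : ℕ) k0 with hj | hj
    · rw [hfj, hδ0 _ hj, add_zero]
      have h1 := hlow j hj
      exact hmemT' _ (S.orderEmbOfFin_mem hS j) (by omega) (by omega)
    · rcases lt_or_ge (j : ℕ) (k0 + L) with hj2 | hj2
      · have hv := hev j hj (by omega)
        rw [hfj, hδ1 _ hj hj2, hv]
        by_cases hs0 : (j : ℕ) - k0 = 0
        · have hx : c + (((j : ℕ) - k0 : ℕ) : ℤ) + -1 = i - ℓ := by rw [hs0]; push_cast; omega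
          rw [hx]; exact hlT
        · have hx : c + (((j : ℕ) - k0 : ℕ) : ℤ) + -1 = c + (((j : ℕ) - k0 - 1 : ℕ) : ℤ) := by
            have : (((j : ℕ) - k0 - 1 : ℕ) : ℤ) = (((j : ℕ) - k0 : ℕ) : ℤ) - 1 := by omega
            omega
          rw [hx]
          have hmem1 := hblk ((j : ℕ) - k0 - 1) (by omega)
          have hb1 : (((j : ℕ) - k0 - 1 : ℕ) : ℤ) ≤ (L : ℤ) - 2 := by omega
          apply hmemT' _ hmem1 (by omega) (by omega)
      · rcases lt_or_ge (j : ℕ) (k0 + L + R) with hj3 | hj3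
        · have hv := hev j (by omega) hj3
          rw [hfj, hδ2 _ hj2 hj3, hv]
          by_cases hstop : (j : ℕ) - k0 = L + R - 1
          · have hx : c + (((j : ℕ) - k0 : ℕ) : ℤ) + 1 = i + 1 + r := by
              rw [hstop]; push_cast; omega
            rw [hx]; exact hrT
          · have hx : c + (((j : ℕ) - k0 : ℕ) : ℤ) + 1 = c + ((((j : ℕ) - k0 + 1) : ℕ) : ℤ) := by
              push_cast; ring
            rw [hx]
            have hmem1 := hblk ((j : ℕ) - k0 + 1) (by omega)
            have hb1 : ((L : ℤ)) + 1 ≤ ((((j : ℕ) - k0 + 1) : ℕ) : ℤ) := by omega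
            apply hmemT' _ hmem1 (by omega) (by omega)
        · rw [hfj, hδ3 _ hj3, add_zero]
          have h1 := claim2 j hj3
          exact hmemT' _ (S.orderEmbOfFin_mem hS j) (by omega) (by omega)
  have hmono : StrictMono f := by
    apply strictMono_of_lt_succ
    intro v h1 h2
    have hfv : f ⟨v, h1⟩ = e ⟨v, h1⟩ + δ v := rfl
    have hfv1 : f ⟨v + 1, h2⟩ = e ⟨v + 1, h2⟩ + δ (v + 1) := rfl
    have hlt : e ⟨v, h1⟩ < e ⟨v + 1, h2⟩ := by
      apply (S.orderEmbOfFin hS).strictMono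
      simp only [Fin.lt_def]; omega
    rcases lt_or_ge (v + 1) k0 with hc1 | hc1
    · rw [hfv, hfv1, hδ0 _ (by omega), hδ0 _ hc1]; omega
    · rcases lt_or_ge v k0 with hc3 | hc3
      · -- v < k0 ≤ v + 1 : boundary into left block
        have hx1 := hlow ⟨v, h1⟩ hc3
        have hx2 : e ⟨v + 1, h2⟩ = c + ((v + 1 - k0 : ℕ) : ℤ) :=
          hev ⟨v + 1, h2⟩ (show k0 ≤ v + 1 from hc1) (show v + 1 < k0 + L + R by omega)
        rw [hfv, hfv1, hδ0 _ hc3, hδ1 _ hc1 (by omega)]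
        have hcast : (((v + 1) - k0 : ℕ) : ℤ) = (v : ℤ) + 1 - k0 := by omega
        omega
      · rcases lt_or_ge (v + 1) (k0 + L) with hc4 | hc4
        · -- both in left block
          rw [hfv, hfv1, hδ1 _ hc3 (by omega), hδ1 _ (by omega) hc4]; omega
        · rcases lt_or_ge v (k0 + L) with hc5 | hc5
          · -- v in left block, v+1 in right block
            have hx1 : e ⟨v, h1⟩ = c + ((v - k0 : ℕ) : ℤ) :=
              hev ⟨v, h1⟩ hc3 (show (v:ℕ) < k0 + L + R by omega)
            have hx2 : e ⟨v + 1, h2⟩ = c + ((v + 1 - k0 : ℕ) : ℤ) :=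
              hev ⟨v + 1, h2⟩ (show k0 ≤ v + 1 by omega) (show v + 1 < k0 + L + R by omega)
            rw [hfv, hfv1, hδ1 _ hc3 hc5, hδ2 _ hc4 (by omega)]
            have hcast : (((v + 1) - k0 : ℕ) : ℤ) = ((v - k0 : ℕ) : ℤ) + 1 := by omega
            omega
          · rcases lt_or_ge (v + 1) (k0 + L + R) with hc6 | hc6
            · -- both in right block
              rw [hfv, hfv1, hδ2 _ hc5 (by omega), hδ2 _ (by omega) hc6]; omega
            · rcases lt_or_ge v (k0 + L + R) with hc7 | hc7
              · -- v in right block, v+1 beyond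
                have hx1 : e ⟨v, h1⟩ = c + ((v - k0 : ℕ) : ℤ) :=
                  hev ⟨v, h1⟩ (show k0 ≤ v by omega) hc7
                have hx2 := claim2 ⟨v + 1, h2⟩ (show k0 + L + R ≤ v + 1 from hc6)
                rw [hfv, hfv1, hδ2 _ hc5 hc7, hδ3 _ hc6]
                have hb1 : ((v - k0 : ℕ) : ℤ) ≤ (L : ℤ) + (R : ℤ) - 1 := by omega
                omega
              · -- both beyond
                rw [hfv, hfv1, hδ3 _ hc7, hδ3 _ hc6]; omega
  have huniq := Finset.orderEmbOfFin_unique hT hmem hmono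
  refine ⟨k0, L, R, c, hL1, hR1, hcount, claim1, ?_⟩
  intro j
  rw [← huniq]


/-- the `t`-th smallest element of `S` (0 outside range). -/
noncomputable def ev (S : Finset ℤ) (t : ℕ) : ℤ :=
  if h : t < S.card then S.orderEmbOfFin rfl ⟨t, h⟩ else 0

/-- the potential function. -/
noncomputable def Phi (S : Finset ℤ) : ℤ :=
  ∑ v ∈ Finset.range S.card, 2 ^ v * ev S v

lemma ev_eq {S : Finset ℤ} {N : ℕ} (hS : S.card = N) {t : ℕ} (h : t < N) :
    ev S t = S.orderEmbOfFin hS ⟨t, h⟩ := by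
  subst hS
  unfold ev
  rw [dif_pos h]

lemma Phi_eq {S : Finset ℤ} {N : ℕ} (hS : S.card = N) :
    Phi S = ∑ v ∈ Finset.range N, 2 ^ v * ev S v := by
  subst hS; rfl

lemma ev_strict {S : Finset ℤ} {N : ℕ} (hS : S.card = N) {t : ℕ} (h : t + 1 < N) :
    ev S t < ev S (t + 1) := by
  rw [ev_eq hS (show t < N by omega), ev_eq hS h]
  apply (S.orderEmbOfFin hS).strictMono
  simp [Fin.lt_def]

lemma sum_Ico_two_pow {a b : ℕ} (h : a ≤ b) :
    ∑ j ∈ Finset.Ico a b, (2 : ℤ) ^ j = 2 ^ b - 2 ^ a := by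
  induction b with
  | zero =>
    have : a = 0 := by omega
    subst this; simp
  | succ b ih =>
    rcases Nat.lt_or_ge a (b + 1) with h1 | h1
    · have h2 : a ≤ b := by omega
      rw [Finset.sum_Ico_succ_top h2, ih h2]
      ring
    · have : a = b + 1 := by omega
      subst this; simp
-- step lemma
lemma step {S T : Finset ℤ} {N : ℕ} (hS : S.card = N) (hT : T.card = N)
    (hmv : FMove S T) :
    (0 < N → ev T 0 ≤ ev S 0) ∧
    (∀ t, t + 1 < N → ev T (t + 1) - ev T t ≤ max (ev S (t + 1) - ev S t) 3) ∧
    Phi S + 1 ≤ Phi T := by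
  obtain ⟨k0, L, R, c, hL1, hR1, hcount, hbval, hM⟩ := master hS hT hmv
  set δ : ℕ → ℤ := fun v => if v < k0 then 0 else if v < k0 + L then -1
    else if v < k0 + L + R then 1 else 0 with hδ
  have hδ0 : ∀ v, v < k0 → δ v = 0 := by intro v hv; simp only [hδ]; rw [if_pos hv]
  have hδ1 : ∀ v, k0 ≤ v → v < k0 + L → δ v = -1 := by
    intro v h1 h2; simp only [hδ]; rw [if_neg (by omega), if_pos (by omega)]
  have hδ2 : ∀ v, k0 + L ≤ v → v < k0 + L + R → δ v = 1 := by
    intro v h1 h2; simp only [hδ]; rw [if_neg (by omega), if_neg (by omega), if_pos (by omega)]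
  have hδ3 : ∀ v, k0 + L + R ≤ v → δ v = 0 := by
    intro v h1; simp only [hδ]; rw [if_neg (by omega), if_neg (by omega), if_neg (by omega)]
  have hMv : ∀ v, (h : v < N) → ev T v = ev S v + δ v := by
    intro v h
    rw [ev_eq hT h, ev_eq hS h, hM ⟨v, h⟩]
  have hbv : ∀ v, k0 ≤ v → v < k0 + L + R → ev S v = c + ((v - k0 : ℕ) : ℤ) := by
    intro v h1 h2
    have h3 : k0 + (v - k0) < N := by omega
    have hval := hbval (v - k0) h3 (by omega)
    have hv2 : v < N := by omega
    rw [ev_eq hS hv2]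
    have hje : (⟨v, hv2⟩ : Fin N) = ⟨k0 + (v - k0), h3⟩ := by
      apply Fin.ext; simp; omega
    rw [show (S.orderEmbOfFin hS) ⟨v, hv2⟩ = (S.orderEmbOfFin hS) ⟨k0 + (v - k0), h3⟩ from
      congrArg _ hje]
    exact hval
  refine ⟨?_, ?_, ?_⟩
  · -- min does not increase
    intro h0
    have h := hMv 0 h0
    rcases Nat.eq_zero_or_pos k0 with hk | hk
    · rw [hδ1 0 (by omega) (by omega)] at h
      omega
    · rw [hδ0 0 hk] at h
      omega
  · -- gaps
    intro t ht
    have h1 := hMv t (by omega)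
    have h2 := hMv (t + 1) ht
    by_cases hj : t < k0 + L ∧ k0 + L ≤ t + 1
    · -- junction : gap was 1, becomes 3
      have hb1 : ev S t = c + ((t - k0 : ℕ) : ℤ) := hbv t (by omega) (by omega)
      have hb2 : ev S (t + 1) = c + ((t + 1 - k0 : ℕ) : ℤ) := hbv (t + 1) (by omega) (by omega)
      rw [hδ1 t (by omega) (by omega)] at h1
      rw [hδ2 (t + 1) (by omega) (by omega)] at h2
      have hmx : (3 : ℤ) ≤ max (ev S (t + 1) - ev S t) 3 := le_max_right _ _
      omega
    · -- otherwise the gap does not increase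
      have hd : δ (t + 1) ≤ δ t := by
        rcases Nat.lt_or_ge t k0 with hr1 | hr1
        · rw [hδ0 t hr1]
          rcases Nat.lt_or_ge (t + 1) k0 with hr2 | hr2
          · rw [hδ0 _ hr2]
          · rw [hδ1 _ hr2 (by omega)]; omega
        · rcases Nat.lt_or_ge t (k0 + L) with hr2 | hr2
          · rw [hδ1 t hr1 hr2, hδ1 (t + 1) (by omega) (by omega)]
          · rcases Nat.lt_or_ge t (k0 + L + R) with hr3 | hr3
            · rw [hδ2 t hr2 hr3]
              rcases Nat.lt_or_ge (t + 1) (k0 + L + R) with hr4 | hr4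
              · rw [hδ2 _ (by omega) hr4]
              · rw [hδ3 _ hr4]; omega
            · rw [hδ3 t hr3, hδ3 _ (by omega)]
      have hmx : ev S (t + 1) - ev S t ≤ max (ev S (t + 1) - ev S t) 3 := le_max_left _ _
      omega
  · -- potential increases
    rw [Phi_eq hS, Phi_eq hT]
    have hsplit : ∑ v ∈ Finset.range N, 2 ^ v * ev T v
        = (∑ v ∈ Finset.range N, 2 ^ v * ev S v) + ∑ v ∈ Finset.range N, 2 ^ v * δ v := by
      rw [← Finset.sum_add_distrib]
      apply Finset.sum_congr rfl
      intro v hv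
      rw [Finset.mem_range] at hv
      rw [hMv v hv]
      ring
    rw [hsplit]
    have key : (1 : ℤ) ≤ ∑ v ∈ Finset.range N, 2 ^ v * δ v := by
      rw [Finset.range_eq_Ico]
      rw [← Finset.sum_Ico_consecutive _ (show 0 ≤ k0 + L + R by omega) (show k0 + L + R ≤ N by omega)]
      rw [← Finset.sum_Ico_consecutive _ (show 0 ≤ k0 + L by omega) (show k0 + L ≤ k0 + L + R by omega)]
      rw [← Finset.sum_Ico_consecutive _ (show 0 ≤ k0 by omega) (show k0 ≤ k0 + L by omega)]
      have p1 : ∑ v ∈ Finset.Ico 0 k0, (2 : ℤ) ^ v * δ v = 0 := by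
        apply Finset.sum_eq_zero
        intro v hv
        rw [Finset.mem_Ico] at hv
        rw [hδ0 v hv.2]
        ring
      have p2 : ∑ v ∈ Finset.Ico k0 (k0 + L), (2 : ℤ) ^ v * δ v = -(2 ^ (k0 + L) - 2 ^ k0) := by
        rw [show -((2:ℤ) ^ (k0 + L) - 2 ^ k0) = ∑ v ∈ Finset.Ico k0 (k0 + L), -((2:ℤ) ^ v) by
          rw [Finset.sum_neg_distrib, sum_Ico_two_pow (by omega)]]
        apply Finset.sum_congr rfl
        intro v hv
        rw [Finset.mem_Ico] at hv
        rw [hδ1 v hv.1 hv.2]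
        ring
      have p3 : ∑ v ∈ Finset.Ico (k0 + L) (k0 + L + R), (2 : ℤ) ^ v * δ v
          = 2 ^ (k0 + L + R) - 2 ^ (k0 + L) := by
        rw [← sum_Ico_two_pow (show k0 + L ≤ k0 + L + R by omega)]
        apply Finset.sum_congr rfl
        intro v hv
        rw [Finset.mem_Ico] at hv
        rw [hδ2 v hv.1 hv.2]
        ring
      have p4 : ∑ v ∈ Finset.Ico (k0 + L + R) N, (2 : ℤ) ^ v * δ v = 0 := by
        apply Finset.sum_eq_zero
        intro v hv
        rw [Finset.mem_Ico] at hv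
        rw [hδ3 v hv.1]
        ring
      rw [p1, p2, p3, p4]
      have hp1 : (2 : ℤ) ^ (k0 + L + 1) ≤ 2 ^ (k0 + L + R) := by
        apply pow_le_pow_right₀ (by norm_num) (by omega)
      have hp2 : (0 : ℤ) < 2 ^ k0 := pow_pos (by norm_num) _
      have hp3 : (2 : ℤ) ^ (k0 + L + 1) = 2 * 2 ^ (k0 + L) := by ring
      omega
    omega

theorem moves_bounded' :
    ∀ N : ℕ, ∃ b : ℕ, ∀ (m : ℕ) (f : ℕ → Finset ℤ),
      (f 0).card = N → (∀ k, k < m → FMove (f k) (f (k + 1))) → m ≤ b := by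
  intro N
  refine ⟨2 * N * N * 2 ^ N, ?_⟩
  intro m f h0 hmv
  have hcard : ∀ s, s ≤ m → (f s).card = N := by
    intro s
    induction s with
    | zero => intro _; exact h0
    | succ s ih =>
      intro hs
      rw [card_move (hmv s (by omega))]
      exact ih (by omega)
  have inv : ∀ s, s ≤ m →
      (0 < N → ev (f s) 0 ≤ ev (f 0) 0) ∧
      (∀ t, t + 1 < N → ev (f s) (t + 1) - ev (f s) t
        ≤ max (ev (f 0) (t + 1) - ev (f 0) t) 3) ∧
      Phi (f 0) + s ≤ Phi (f s) := by
    intro s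
    induction s with
    | zero => exact fun _ => ⟨fun _ => le_refl _, fun t _ => le_max_left _ _, by simp⟩
    | succ s ih =>
      intro hs
      obtain ⟨i1, i2, i3⟩ := ih (by omega)
      obtain ⟨s1, s2, s3⟩ := step (hcard s (by omega)) (hcard (s + 1) hs) (hmv s (by omega))
      refine ⟨fun hp => le_trans (s1 hp) (i1 hp), ?_, by push_cast; push_cast at i3; omega⟩
      intro t ht
      have hA := s2 t ht
      have hB := i2 t ht
      have hC : max (ev (f s) (t + 1) - ev (f s) t) 3
          ≤ max (ev (f 0) (t + 1) - ev (f 0) t) 3 :=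
        max_le hB (le_max_right _ _)
      exact le_trans hA hC
  obtain ⟨i1, i2, i3⟩ := inv m le_rfl
  have hgap0pos : ∀ t, t + 1 < N → 1 ≤ ev (f 0) (t + 1) - ev (f 0) t := by
    intro t ht
    have := ev_strict h0 ht
    omega
  have hpt : ∀ j, j < N → ev (f m) j ≤ ev (f 0) j + 2 * j := by
    intro j hj
    have e1 : ∑ t ∈ Finset.range j, (ev (f m) (t + 1) - ev (f m) t)
        = ev (f m) j - ev (f m) 0 := Finset.sum_range_sub (ev (f m)) j
    have e2 : ∑ t ∈ Finset.range j, (ev (f 0) (t + 1) - ev (f 0) t)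
        = ev (f 0) j - ev (f 0) 0 := Finset.sum_range_sub (ev (f 0)) j
    have hsum : ∑ t ∈ Finset.range j, (ev (f m) (t + 1) - ev (f m) t)
        ≤ ∑ t ∈ Finset.range j, ((ev (f 0) (t + 1) - ev (f 0) t) + 2) := by
      apply Finset.sum_le_sum
      intro t ht'
      rw [Finset.mem_range] at ht'
      have hA := i2 t (by omega)
      have hB := hgap0pos t (by omega)
      have hC : max (ev (f 0) (t + 1) - ev (f 0) t) 3
          ≤ (ev (f 0) (t + 1) - ev (f 0) t) + 2 := max_le (by omega) (by omega)
      omega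
    have hsum2 : ∑ t ∈ Finset.range j, ((ev (f 0) (t + 1) - ev (f 0) t) + 2)
        = (ev (f 0) j - ev (f 0) 0) + 2 * j := by
      rw [Finset.sum_add_distrib, e2, Finset.sum_const, Finset.card_range]
      push_cast
      ring
    have hmin := i1 (by omega)
    rw [e1] at hsum
    rw [hsum2] at hsum
    omega
  have hPhiB : Phi (f m) - Phi (f 0) ≤ (N : ℤ) * (2 ^ N * (2 * N)) := by
    rw [Phi_eq (hcard m le_rfl), Phi_eq h0, ← Finset.sum_sub_distrib]
    have hbd : ∀ v ∈ Finset.range N,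
        (2 : ℤ) ^ v * ev (f m) v - 2 ^ v * ev (f 0) v ≤ 2 ^ N * (2 * N) := by
      intro v hv
      rw [Finset.mem_range] at hv
      have h1 := hpt v hv
      have hpw : (0 : ℤ) < 2 ^ v := pow_pos (by norm_num) _
      have hpw2 : (2 : ℤ) ^ v ≤ 2 ^ N := pow_le_pow_right₀ (by norm_num) (le_of_lt hv)
      have step1 : (2 : ℤ) ^ v * ev (f m) v - 2 ^ v * ev (f 0) v
          = 2 ^ v * (ev (f m) v - ev (f 0) v) := by ring
      rw [step1]
      have step2 : (2 : ℤ) ^ v * (ev (f m) v - ev (f 0) v) ≤ 2 ^ v * (2 * v) := by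
        apply mul_le_mul_of_nonneg_left (by omega) (le_of_lt hpw)
      have step3 : (2 : ℤ) ^ v * (2 * v) ≤ 2 ^ N * (2 * N) := by
        apply mul_le_mul hpw2 (by push_cast; omega) (by positivity) (by positivity)
      omega
    calc ∑ v ∈ Finset.range N, ((2 : ℤ) ^ v * ev (f m) v - 2 ^ v * ev (f 0) v)
        ≤ ∑ _v ∈ Finset.range N, (2 : ℤ) ^ N * (2 * N) := Finset.sum_le_sum hbd
      _ = (N : ℤ) * (2 ^ N * (2 * N)) := by
          rw [Finset.sum_const, Finset.card_range]
          push_cast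
          ring
  have hfin : (m : ℤ) ≤ (2 * N * N * 2 ^ N : ℕ) := by
    push_cast
    push_cast at i3
    nlinarith [hPhiB, i3]
  exact_mod_cast hfin


end MB

/-- The chip-firing process terminates: for each number of violinists `N` there is a
bound on the length of any sequence of moves starting from any state of `N` violinists. -/
theorem moves_bounded :
    ∀ N : ℕ, ∃ b : ℕ, ∀ (m : ℕ) (f : ℕ → Finset ℤ),
      (f 0).card = N → (∀ k, k < m → FMove (f k) (f (k + 1))) → m ≤ b :=
  MB.moves_bounded'
end

section
/- Given any state that admits a move, performing a move strictly increases the entropy of the state, where the entropy of a state S with a_i violinists in room i is P(S,2) = Σ a_i · 2^i. -/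
/-- A move on multi-occupancy states: violinists at adjacent rooms `i` and `i+1`
are dispersed, with left neighborhood `ℓ` and right neighborhood `r`. -/
def IsMove (a b : ℤ →₀ ℕ) (i ℓ r : ℤ) : Prop :=
  1 ≤ ℓ ∧ 1 ≤ r ∧ 0 < a i ∧ 0 < a (i + 1) ∧
  (∀ j : ℤ, 1 ≤ j → j < ℓ → 0 < a (i - j)) ∧ a (i - ℓ) = 0 ∧
  (∀ j : ℤ, 2 ≤ j → j ≤ r → 0 < a (i + j)) ∧ a (i + 1 + r) = 0 ∧
  ∀ k : ℤ, (b k : ℤ) = (a k : ℤ) - (if k = i then 1 else 0) - (if k = i + 1 then 1 else 0)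
      + (if k = i - ℓ then 1 else 0) + (if k = i + 1 + r then 1 else 0)

/-- Some move is possible from `a` to `b`. -/
def Move (a b : ℤ →₀ ℕ) : Prop := ∃ i ℓ r : ℤ, IsMove a b i ℓ r

/-- Reachability by a (possibly empty) sequence of moves. -/
def Reaches : (ℤ →₀ ℕ) → (ℤ →₀ ℕ) → Prop := Relation.ReflTransGen Move

/-- A final state: no move is possible. -/
def IsFinal (a : ℤ →₀ ℕ) : Prop := ¬ ∃ b, Move a b

/-- A clusteron: occupied rooms form a set of consecutive integers. -/
def IsClusteron (a : ℤ →₀ ℕ) : Prop :=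
  ∃ lo hi : ℤ, lo ≤ hi ∧ ∀ i : ℤ, 0 < a i ↔ lo ≤ i ∧ i ≤ hi

/-- The size of a state: total number of violinists. -/
def size (a : ℤ →₀ ℕ) : ℕ := a.sum fun _ n => n

/-- A gap of size `x` starting right after room `i`: rooms `i` and `i+x+1` are occupied,
rooms `i+1,...,i+x` are empty. -/
def HasGap (a : ℤ →₀ ℕ) (i : ℤ) (x : ℕ) : Prop :=
  0 < x ∧ 0 < a i ∧ (∀ j : ℤ, 1 ≤ j → j ≤ (x : ℤ) → a (i + j) = 0) ∧ 0 < a (i + x + 1)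

/-- The entropy of a state: `Σ aᵢ · 2^i`. -/
noncomputable def entropy (a : ℤ →₀ ℕ) : ℚ := a.sum fun i n => (n : ℚ) * (2 : ℚ) ^ i

/-- Performing any move strictly increases the entropy of the state. -/
theorem entropy_strict_increase (a b : ℤ →₀ ℕ) (i ℓ r : ℤ) (h : IsMove a b i ℓ r) :
    entropy a < entropy b := by
  obtain ⟨hℓ, hr, hai, hai1, -, -, -, -, hb⟩ := h
  set S : Finset ℤ := (a.support ∪ b.support) ∪ {i, i + 1, i - ℓ, i + 1 + r} with hS
  have hiS : i ∈ S := by simp [hS]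
  have hi1S : i + 1 ∈ S := by simp [hS]
  have hilS : i - ℓ ∈ S := by simp [hS]
  have hirS : i + 1 + r ∈ S := by simp [hS]
  have hA : entropy a = ∑ k ∈ S, (a k : ℚ) * 2 ^ k := by
    rw [entropy]
    exact Finsupp.sum_of_support_subset a
      (by intro x hx; rw [hS]; exact Finset.mem_union_left _ (Finset.mem_union_left _ hx)) _
      (by intros; simp)
  have hB : entropy b = ∑ k ∈ S, (b k : ℚ) * 2 ^ k := by
    rw [entropy]
    exact Finsupp.sum_of_support_subset b
      (by intro x hx; rw [hS]; exact Finset.mem_union_left _ (Finset.mem_union_right _ hx)) _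
      (by intros; simp)
  have hterm : ∀ k : ℤ, ((b k : ℚ)) * 2 ^ k = (a k : ℚ) * 2 ^ k
      - (if k = i then (2:ℚ) ^ k else 0) - (if k = i + 1 then (2:ℚ) ^ k else 0)
      + (if k = i - ℓ then (2:ℚ) ^ k else 0) + (if k = i + 1 + r then (2:ℚ) ^ k else 0) := by
    intro k
    have hk := hb k
    have hq : (b k : ℚ) = (a k : ℚ) - (if k = i then 1 else 0) - (if k = i + 1 then 1 else 0)
        + (if k = i - ℓ then 1 else 0) + (if k = i + 1 + r then 1 else 0) := by
      exact_mod_cast congrArg (fun z : ℤ => (z : ℚ)) hk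
    rw [hq]
    split_ifs <;> ring
  have hdiff : entropy b = entropy a - 2 ^ i - 2 ^ (i + 1) + 2 ^ (i - ℓ) + 2 ^ (i + 1 + r) := by
    rw [hA, hB]
    simp only [hterm]
    rw [Finset.sum_add_distrib, Finset.sum_add_distrib, Finset.sum_sub_distrib,
      Finset.sum_sub_distrib]
    rw [Finset.sum_ite_eq' S i, Finset.sum_ite_eq' S (i + 1),
      Finset.sum_ite_eq' S (i - ℓ), Finset.sum_ite_eq' S (i + 1 + r)]
    simp [hiS, hi1S, hilS, hirS]
  have h2i : (0:ℚ) < 2 ^ i := by positivity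
  have hpos : (0:ℚ) < 2 ^ (i - ℓ) := by positivity
  have hbig : (2:ℚ) ^ (i + 2) ≤ 2 ^ (i + 1 + r) := by
    apply zpow_le_zpow_right₀ (by norm_num)
    linarith
  have e1 : (2:ℚ) ^ (i + 2) = 2 ^ i * 4 := by
    rw [zpow_add₀ (by norm_num : (2:ℚ) ≠ 0)]; norm_num
  have e2 : (2:ℚ) ^ (i + 1) = 2 ^ i * 2 := by
    rw [zpow_add₀ (by norm_num : (2:ℚ) ≠ 0)]; norm_num
  rw [hdiff]
  linarith
end

section
/- Every final state reachable from a clusteron has all gaps of size 1 or 2, where a gap is a maximal run of unoccupied rooms lying strictly between two occupied rooms. -/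
/-- Invariant: no gap of size ≥ 3, i.e. between any occupied `p ≤ i` and occupied
`q ≥ i + 4` one of `i+1, i+2, i+3` is occupied. -/
def NoBigGap (a : ℤ →₀ ℕ) : Prop :=
  ∀ i p q : ℤ, p ≤ i → i + 4 ≤ q → 0 < a p → 0 < a q →
    0 < a (i + 1) ∨ 0 < a (i + 2) ∨ 0 < a (i + 3)

lemma noBigGap_of_clusteron {a : ℤ →₀ ℕ} (ha : IsClusteron a) : NoBigGap a := by
  obtain ⟨lo, hi, _, h⟩ := ha
  intro i p q hp hq hap haq
  rw [h] at hap haq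
  left
  rw [h]
  omega

lemma noBigGap_of_move {a b : ℤ →₀ ℕ} (hm : Move a b) (ha : NoBigGap a) : NoBigGap b := by
  obtain ⟨m, ℓ, r, hℓ, hr, ham, ham1, hleft, hℓ0, hright, hr0, heq⟩ := hm
  intro i p q hp hq hbp hbq
  by_contra hcon
  push_neg at hcon
  obtain ⟨h1, h2, h3⟩ := hcon
  have h1 : b (i + 1) = 0 := by omega
  have h2 : b (i + 2) = 0 := by omega
  have h3 : b (i + 3) = 0 := by omega
  -- room m - 1 is occupied in b
  have hbm1 : 0 < b (m - 1) := by
    rcases eq_or_lt_of_le hℓ with hone | hgt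
    · have e := heq (m - 1)
      rw [if_neg (by omega), if_neg (by omega), if_pos (by omega), if_neg (by omega)] at e
      omega
    · have hocc := hleft 1 (by omega) (by omega)
      have e := heq (m - 1)
      rw [if_neg (by omega), if_neg (by omega), if_neg (by omega), if_neg (by omega)] at e
      rw [show m - 1 = m - (1:ℤ) from rfl] at e
      omega
  -- room m + 2 is occupied in b
  have hbm2 : 0 < b (m + 2) := by
    rcases eq_or_lt_of_le hr with hone | hgt
    · have e := heq (m + 2)
      rw [if_neg (by omega), if_neg (by omega), if_neg (by omega), if_pos (by omega)] at e
      omega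
    · have hocc := hright 2 (by omega) (by omega)
      have e := heq (m + 2)
      rw [if_neg (by omega), if_neg (by omega), if_neg (by omega), if_neg (by omega)] at e
      omega
  -- m is not near the window i+1..i+3
  have hmr : m ≤ i - 1 ∨ i + 4 ≤ m := by
    by_contra hc
    push_neg at hc
    have : m = i ∨ m = i + 1 ∨ m = i + 2 ∨ m = i + 3 := by omega
    rcases this with hmm | hmm | hmm | hmm
    · rw [show i + 2 = m + 2 from by omega] at h2; omega
    · rw [show i + 3 = m + 2 from by omega] at h3; omega
    · rw [show i + 1 = m - 1 from by omega] at h1; omega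
    · rw [show i + 2 = m - 1 from by omega] at h2; omega
  -- the window is empty in a too
  have ha1 : a (i + 1) = 0 := by
    have e := heq (i + 1)
    rw [if_neg (by omega), if_neg (by omega)] at e
    split_ifs at e <;> omega
  have ha2 : a (i + 2) = 0 := by
    have e := heq (i + 2)
    rw [if_neg (by omega), if_neg (by omega)] at e
    split_ifs at e <;> omega
  have ha3 : a (i + 3) = 0 := by
    have e := heq (i + 3)
    rw [if_neg (by omega), if_neg (by omega)] at e
    split_ifs at e <;> omega
  -- find an a-occupied room ≤ i
  have hp' : ∃ p', p' ≤ i ∧ 0 < a p' := by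
    by_cases hap : 0 < a p
    · exact ⟨p, hp, hap⟩
    · have hap0 : a p = 0 := by omega
      have hpm : p ≠ m := by intro h; rw [h] at hap0; omega
      have hpm1 : p ≠ m + 1 := by intro h; rw [h] at hap0; omega
      have e := heq p
      rw [if_neg hpm, if_neg hpm1] at e
      have : p = m - ℓ ∨ p = m + 1 + r := by
        by_contra hc
        push_neg at hc
        rw [if_neg hc.1, if_neg hc.2] at e
        omega
      rcases this with hpe | hpe
      · rcases hmr with hml | hml
        · exact ⟨m, by omega, ham⟩
        · exfalso
          have hocc := hleft (m - i - 1) (by omega) (by omega)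
          rw [show m - (m - i - 1) = i + 1 from by ring] at hocc
          omega
      · exact ⟨m + 1, by omega, ham1⟩
  -- find an a-occupied room ≥ i + 4
  have hq' : ∃ q', i + 4 ≤ q' ∧ 0 < a q' := by
    by_cases haq : 0 < a q
    · exact ⟨q, hq, haq⟩
    · have haq0 : a q = 0 := by omega
      have hqm : q ≠ m := by intro h; rw [h] at haq0; omega
      have hqm1 : q ≠ m + 1 := by intro h; rw [h] at haq0; omega
      have e := heq q
      rw [if_neg hqm, if_neg hqm1] at e
      have : q = m - ℓ ∨ q = m + 1 + r := by
        by_contra hc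
        push_neg at hc
        rw [if_neg hc.1, if_neg hc.2] at e
        omega
      rcases this with hqe | hqe
      · exact ⟨m, by omega, ham⟩
      · rcases hmr with hml | hml
        · exfalso
          have hocc := hright (i + 3 - m) (by omega) (by omega)
          rw [show m + (i + 3 - m) = i + 3 from by ring] at hocc
          omega
        · exact ⟨m + 1, by omega, ham1⟩
  obtain ⟨p', hp'le, hp'occ⟩ := hp'
  obtain ⟨q', hq'le, hq'occ⟩ := hq'
  have := ha i p' q' hp'le hq'le hp'occ hq'occ
  omega

lemma noBigGap_of_reaches {a b : ℤ →₀ ℕ} (hab : Reaches a b) (ha : NoBigGap a) :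
    NoBigGap b := by
  induction hab with
  | refl => exact ha
  | tail _ hstep ih => exact noBigGap_of_move hstep ih

/-- Every gap in a final state reachable from a clusteron has size 1 or 2. -/
theorem final_state_gaps_one_or_two (a b : ℤ →₀ ℕ)
    (ha : IsClusteron a) (hab : Reaches a b) (hb : IsFinal b) :
    ∀ (i : ℤ) (x : ℕ), HasGap b i x → x = 1 ∨ x = 2 := by
  have hinv : NoBigGap b := noBigGap_of_reaches hab (noBigGap_of_clusteron ha)
  intro i x hgap
  obtain ⟨hx, hbi, hzero, hocc⟩ := hgap
  by_contra hc
  push_neg at hc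
  have hx3 : 3 ≤ x := by omega
  have z1 := hzero 1 (by omega) (by omega)
  have z2 := hzero 2 (by omega) (by omega)
  have z3 := hzero 3 (by omega) (by omega)
  have := hinv i i (i + x + 1) (le_refl i) (by push_cast; omega) hbi hocc
  omega
end

section
/- In any state reachable from a clusteron by a sequence of moves, between any two distinct gaps of size 2 there exists at least one pair of adjacently occupied rooms. -/
/-- A gap of size exactly 2, unfolded. -/
def Gap2 (a : ℤ →₀ ℕ) (p : ℤ) : Prop :=
  0 < a p ∧ a (p + 1) = 0 ∧ a (p + 2) = 0 ∧ 0 < a (p + 3)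

lemma gap2_iff (a : ℤ →₀ ℕ) (p : ℤ) : HasGap a p 2 ↔ Gap2 a p := by
  unfold HasGap Gap2
  constructor
  · rintro ⟨-, h0, hmid, h3⟩
    refine ⟨h0, hmid 1 (by norm_num) (by norm_num), hmid 2 (by norm_num) (by norm_num), ?_⟩
    have : p + ((2 : ℕ) : ℤ) + 1 = p + 3 := by push_cast; ring
    rwa [this] at h3
  · rintro ⟨h0, h1, h2, h3⟩
    refine ⟨by norm_num, h0, ?_, ?_⟩
    · intro j hj1 hj2
      have hj2' : j ≤ 2 := by exact_mod_cast hj2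
      have : j = 1 ∨ j = 2 := by omega
      rcases this with rfl | rfl
      · exact h1
      · exact h2
    · have : p + ((2 : ℕ) : ℤ) + 1 = p + 3 := by push_cast; ring
      rwa [this]

/-- Invariant 1: from any occupied room, if there is an occupied room strictly to the
right, the next occupied room is within distance 3. -/
def VInv1 (a : ℤ →₀ ℕ) : Prop :=
  ∀ u v : ℤ, 0 < a u → 0 < a v → u < v → ∃ w, u < w ∧ w ≤ u + 3 ∧ w ≤ v ∧ 0 < a w

/-- Invariant 2: between any two gaps of size 2 there is an adjacently occupied pair. -/
def VInv2 (a : ℤ →₀ ℕ) : Prop :=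
  ∀ p q : ℤ, Gap2 a p → Gap2 a q → p < q →
    ∃ k, p + 3 ≤ k ∧ k + 1 ≤ q ∧ 0 < a k ∧ 0 < a (k + 1)

def VInv (a : ℤ →₀ ℕ) : Prop := VInv1 a ∧ VInv2 a

/-- Leftward version of VInv1. -/
lemma inv1_left {a : ℤ →₀ ℕ} (h1 : VInv1 a) :
    ∀ u v : ℤ, 0 < a u → 0 < a v → u < v → ∃ w, v - 3 ≤ w ∧ w < v ∧ 0 < a w := by
  have key : ∀ n : ℕ, ∀ u v : ℤ, (v - u).toNat ≤ n → 0 < a u → 0 < a v → u < v →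
      ∃ w, v - 3 ≤ w ∧ w < v ∧ 0 < a w := by
    intro n
    induction n with
    | zero => intro u v h hu hv huv; omega
    | succ n ih =>
      intro u v h hu hv huv
      obtain ⟨w, hw1, hw2, hw3, hw⟩ := h1 u v hu hv huv
      rcases eq_or_lt_of_le hw3 with heq | hwv
      · exact ⟨u, by omega, by omega, hu⟩
      · exact ih w v (by omega) hw hv hwv
  intro u v hu hv huv
  exact key (v - u).toNat u v le_rfl hu hv huv

lemma clusteron_inv {a : ℤ →₀ ℕ} (ha : IsClusteron a) : VInv a := by
  obtain ⟨lo, hi, hlh, h⟩ := ha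
  constructor
  · intro u v hu hv huv
    rw [h] at hu hv
    refine ⟨u + 1, by omega, by omega, by omega, ?_⟩
    rw [h]; omega
  · intro p q hp hq hpq
    exfalso
    obtain ⟨hp0, hp1, hp2, hp3⟩ := hp
    rw [h] at hp0 hp3
    have h1 : 0 < a (p + 1) := by rw [h]; omega
    omega

lemma move_inv {a c : ℤ →₀ ℕ} {i ℓ r : ℤ} (hm : IsMove a c i ℓ r) (hInv : VInv a) : VInv c := by
  obtain ⟨hl, hr, hai, hai1, haL', haR', heq⟩ :
      1 ≤ ℓ ∧ 1 ≤ r ∧ 0 < a i ∧ 0 < a (i + 1) ∧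
      ((∀ j : ℤ, 1 ≤ j → j < ℓ → 0 < a (i - j)) ∧ a (i - ℓ) = 0) ∧
      ((∀ j : ℤ, 2 ≤ j → j ≤ r → 0 < a (i + j)) ∧ a (i + 1 + r) = 0) ∧
      ∀ k : ℤ, (c k : ℤ) = (a k : ℤ) - (if k = i then 1 else 0) - (if k = i + 1 then 1 else 0)
        + (if k = i - ℓ then 1 else 0) + (if k = i + 1 + r then 1 else 0) := by
    obtain ⟨a1, a2, a3, a4, a5, a6, a7, a8, a9⟩ := hm
    exact ⟨a1, a2, a3, a4, ⟨a5, a6⟩, ⟨a7, a8⟩, a9⟩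
  obtain ⟨haintL, haL⟩ := haL'
  obtain ⟨haintR, haR⟩ := haR'
  obtain ⟨hI1, hI2⟩ := hInv
  set L : ℤ := i - ℓ with hLdef
  set R : ℤ := i + 1 + r with hRdef
  -- basic value facts
  have hsame : ∀ x : ℤ, x ≠ i → x ≠ i + 1 → x ≠ L → x ≠ R → c x = a x := by
    intro x h1 h2 h3 h4
    have h := heq x
    rw [if_neg h1, if_neg h2, if_neg h3, if_neg h4] at h
    omega
  have hcL : c L = 1 := by
    have h := heq L
    rw [if_neg (show L ≠ i by omega), if_neg (show L ≠ i + 1 by omega), if_pos rfl,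
      if_neg (show L ≠ R by omega)] at h
    omega
  have hcR : c R = 1 := by
    have h := heq R
    rw [if_neg (show R ≠ i by omega), if_neg (show R ≠ i + 1 by omega),
      if_neg (show R ≠ L by omega), if_pos rfl] at h
    omega
  have hciZ : (c i : ℤ) = (a i : ℤ) - 1 := by
    have h := heq i
    rw [if_pos rfl, if_neg (show i ≠ i + 1 by omega), if_neg (show i ≠ L by omega),
      if_neg (show i ≠ R by omega)] at h
    omega
  have hci1Z : (c (i + 1) : ℤ) = (a (i + 1) : ℤ) - 1 := by
    have h := heq (i + 1)
    rw [if_neg (show i + 1 ≠ i by omega), if_pos rfl, if_neg (show i + 1 ≠ L by omega),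
      if_neg (show i + 1 ≠ R by omega)] at h
    omega
  have aIntL : ∀ x : ℤ, L < x → x < i → 0 < a x := by
    intro x h1 h2
    have h := haintL (i - x) (by omega) (by omega)
    rwa [show i - (i - x) = x by ring] at h
  have aIntR : ∀ x : ℤ, i + 1 < x → x < R → 0 < a x := by
    intro x h1 h2
    have h := haintR (x - i) (by omega) (by omega)
    rwa [show i + (x - i) = x by ring] at h
  have cIntL : ∀ x : ℤ, L < x → x < i → 0 < c x := by
    intro x h1 h2
    rw [hsame x (by omega) (by omega) (by omega) (by omega)]
    exact aIntL x h1 h2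
  have cIntR : ∀ x : ℤ, i + 1 < x → x < R → 0 < c x := by
    intro x h1 h2
    rw [hsame x (by omega) (by omega) (by omega) (by omega)]
    exact aIntR x h1 h2
  have occL : ∀ x : ℤ, L ≤ x → x ≤ i - 1 → 0 < c x := by
    intro x h1 h2
    rcases eq_or_lt_of_le h1 with heq' | hlt
    · rw [← heq', hcL]; norm_num
    · exact cIntL x hlt (by omega)
  have occR : ∀ x : ℤ, i + 2 ≤ x → x ≤ R → 0 < c x := by
    intro x h1 h2
    rcases eq_or_lt_of_le h2 with heq' | hlt
    · rw [heq', hcR]; norm_num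
    · exact cIntR x (by omega) hlt
  have hczero : ∀ x : ℤ, 0 < a x → c x = 0 →
      (x = i ∧ a i = 1) ∨ (x = i + 1 ∧ a (i + 1) = 1) := by
    intro x hax hcx
    by_cases h1 : x = i
    · subst h1; left; exact ⟨rfl, by omega⟩
    by_cases h2 : x = i + 1
    · subst h2; right; exact ⟨rfl, by omega⟩
    by_cases h3 : x = L
    · subst h3; omega
    by_cases h4 : x = R
    · subst h4; omega
    · rw [hsame x h1 h2 h3 h4] at hcx; omega
  constructor
  · -- VInv1 c
    intro u v hu hv huv
    by_cases hv3 : v ≤ u + 3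
    · exact ⟨v, huv, hv3, le_refl v, hv⟩
    push_neg at hv3
    suffices h : ∃ w, u < w ∧ w ≤ u + 3 ∧ 0 < c w by
      obtain ⟨w, h1, h2, h3⟩ := h
      exact ⟨w, h1, h2, by omega, h3⟩
    by_cases hA : u < L
    · -- u strictly left of the window
      have hau : 0 < a u := by
        rw [← hsame u (by omega) (by omega) (by omega) (by omega)]; exact hu
      obtain ⟨w, hw1, hw2, hw3, haw⟩ := hI1 u i hau hai (by omega)
      by_cases hwi : w = i
      · exact ⟨i - 1, by omega, by omega, occL (i - 1) (by omega) (by omega)⟩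
      · have hwL : w ≠ L := by
          intro h; rw [h] at haw; omega
        by_cases hwlt : w < L
        · refine ⟨w, hw1, hw2, ?_⟩
          rw [hsame w (by omega) (by omega) hwL (by omega)]; exact haw
        · exact ⟨w, hw1, hw2, cIntL w (by omega) (by omega)⟩
    by_cases hB : u = L
    · subst hB
      by_cases hl2 : 2 ≤ ℓ
      · exact ⟨L + 1, by omega, by omega, cIntL (L + 1) (by omega) (by omega)⟩
      · exact ⟨i + 2, by omega, by omega, occR (i + 2) (by omega) (by omega)⟩
    by_cases hC : u ≤ i + 1
    · -- L < u ≤ i+1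
      by_cases hC2 : u + 1 < i
      · exact ⟨u + 1, by omega, by omega, cIntL (u + 1) (by omega) (by omega)⟩
      · exact ⟨i + 2, by omega, by omega, occR (i + 2) (by omega) (by omega)⟩
    by_cases hD : u < R
    · exact ⟨u + 1, by omega, by omega, occR (u + 1) (by omega) (by omega)⟩
    by_cases hE : u = R
    · subst hE
      have hav : 0 < a v := by
        rw [← hsame v (by omega) (by omega) (by omega) (by omega)]; exact hv
      by_cases hr2 : 2 ≤ r
      · obtain ⟨w, hw1, hw2, hw3, haw⟩ :=
          hI1 (R - 1) v (aIntR (R - 1) (by omega) (by omega)) hav (by omega)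
        have hwR : w ≠ R := by intro h; rw [h] at haw; omega
        refine ⟨w, by omega, by omega, ?_⟩
        rw [hsame w (by omega) (by omega) (by omega) hwR]; exact haw
      · obtain ⟨w, hw1, hw2, hw3, haw⟩ := hI1 (i + 1) v hai1 hav (by omega)
        have hwR : w ≠ R := by intro h; rw [h] at haw; omega
        refine ⟨w, by omega, by omega, ?_⟩
        rw [hsame w (by omega) (by omega) (by omega) hwR]; exact haw
    · -- u > R
      have hau : 0 < a u := by
        rw [← hsame u (by omega) (by omega) (by omega) (by omega)]; exact hu
      have hav : 0 < a v := by
        rw [← hsame v (by omega) (by omega) (by omega) (by omega)]; exact hv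
      obtain ⟨w, hw1, hw2, hw3, haw⟩ := hI1 u v hau hav huv
      refine ⟨w, hw1, hw2, ?_⟩
      rw [hsame w (by omega) (by omega) (by omega) (by omega)]; exact haw
  · -- VInv2 c
    -- gap classification
    have gapC : ∀ p : ℤ, Gap2 c p →
        (p = i - 1 ∧ a i = 1 ∧ a (i + 1) = 1) ∨ (Gap2 a p ∧ (p + 3 < L ∨ R < p)) := by
      intro p hp
      obtain ⟨hp0, hp1, hp2, hp3⟩ := hp
      have occWin : ∀ x : ℤ, L ≤ x → x ≤ R → x ≠ i → x ≠ i + 1 → 0 < c x := by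
        intro x h1 h2 h3 h4
        rcases le_or_gt x (i - 1) with h | h
        · exact occL x h1 h
        · exact occR x (by omega) h2
      have cell : ∀ x : ℤ, c x = 0 → x < L ∨ R < x ∨ x = i ∨ x = i + 1 := by
        intro x hx
        by_contra hcon
        push_neg at hcon
        obtain ⟨e1, e2, e3, e4⟩ := hcon
        have := occWin x (by omega) (by omega) e3 e4
        omega
      have c1 := cell _ hp1
      have c2 := cell _ hp2
      -- three possible situations
      by_cases hnew : p + 1 = i
      · -- new gap
        left
        have hAi : a i = 1 := by
          rcases hczero i hai (by rw [← hnew]; exact hp1) with ⟨_, h⟩ | ⟨h, _⟩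
          · exact h
          · omega
        have hAi1 : a (i + 1) = 1 := by
          rcases hczero (i + 1) hai1 (by rw [show i + 1 = p + 2 by omega]; exact hp2)
            with ⟨h, _⟩ | ⟨_, h⟩
          · omega
          · exact h
        exact ⟨by omega, hAi, hAi1⟩
      · -- old gap: cells on one side of the window
        right
        have hside : p + 2 < L ∨ R < p + 1 := by omega
        rcases hside with hleft | hright
        · -- left of the window
          have e1 : a (p + 1) = 0 := by
            rw [← hsame (p + 1) (by omega) (by omega) (by omega) (by omega)]; exact hp1
          have e2 : a (p + 2) = 0 := by
            rw [← hsame (p + 2) (by omega) (by omega) (by omega) (by omega)]; exact hp2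
          have e0 : 0 < a p := by
            rw [← hsame p (by omega) (by omega) (by omega) (by omega)]; exact hp0
          have h3L : p + 3 ≠ L := by
            intro hPL
            obtain ⟨w, hw1, hw2, hw3, haw⟩ := hI1 p i e0 hai (by omega)
            have : w = p + 1 ∨ w = p + 2 ∨ w = p + 3 := by omega
            rcases this with rfl | rfl | rfl
            · omega
            · omega
            · rw [hPL] at haw; omega
          have e3 : 0 < a (p + 3) := by
            rw [← hsame (p + 3) (by omega) (by omega) h3L (by omega)]; exact hp3
          exact ⟨⟨e0, e1, e2, e3⟩, Or.inl (by omega)⟩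
        · -- right of the window
          have e1 : a (p + 1) = 0 := by
            rw [← hsame (p + 1) (by omega) (by omega) (by omega) (by omega)]; exact hp1
          have e2 : a (p + 2) = 0 := by
            rw [← hsame (p + 2) (by omega) (by omega) (by omega) (by omega)]; exact hp2
          have e3 : 0 < a (p + 3) := by
            rw [← hsame (p + 3) (by omega) (by omega) (by omega) (by omega)]; exact hp3
          have hpR : p ≠ R := by
            intro hPR
            by_cases hr2 : 2 ≤ r
            · obtain ⟨w, hw1, hw2, hw3, haw⟩ :=
                hI1 (R - 1) (p + 3) (aIntR (R - 1) (by omega) (by omega)) e3 (by omega)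
              have : w = R ∨ w = R + 1 ∨ w = R + 2 := by omega
              rcases this with rfl | hw | hw
              · omega
              · rw [hw, show R + 1 = p + 1 by omega] at haw; omega
              · rw [hw, show R + 2 = p + 2 by omega] at haw; omega
            · obtain ⟨w, hw1, hw2, hw3, haw⟩ := hI1 (i + 1) (p + 3) hai1 e3 (by omega)
              have : w = R ∨ w = R + 1 ∨ w = R + 2 := by omega
              rcases this with rfl | hw | hw
              · omega
              · rw [hw, show R + 1 = p + 1 by omega] at haw; omega
              · rw [hw, show R + 2 = p + 2 by omega] at haw; omega
          have e0 : 0 < a p := by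
            rw [← hsame p (by omega) (by omega) (by omega) hpR]; exact hp0
          exact ⟨⟨e0, e1, e2, e3⟩, Or.inr (by omega)⟩
    -- pair finder on the left of a fragile pair
    have pairLeft : ∀ p : ℤ, a i = 1 → a (i + 1) = 1 → Gap2 a p → p + 3 < L →
        ∃ k, p + 3 ≤ k ∧ k + 1 ≤ i - 1 ∧ 0 < c k ∧ 0 < c (k + 1) := by
      intro p h1i h1i1 hp hpL
      by_cases hl2 : 2 ≤ ℓ
      · refine ⟨L, by omega, by omega, by rw [hcL]; norm_num, ?_⟩
        exact cIntL (L + 1) (by omega) (by omega)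
      · -- ℓ = 1, L = i - 1
        by_cases h2 : 0 < a (i - 2)
        · refine ⟨i - 2, by omega, by omega, ?_, ?_⟩
          · rw [hsame (i - 2) (by omega) (by omega) (by omega) (by omega)]; exact h2
          · rw [show i - 2 + 1 = L by omega, hcL]; norm_num
        · obtain ⟨w, hw1, hw2, haw⟩ := inv1_left hI1 p i hp.1 hai (by omega)
          have hwe : w = i - 3 := by
            have hL1 : L = i - 1 := by omega
            have : w = i - 3 ∨ w = i - 2 ∨ w = i - 1 := by omega
            rcases this with h | h | h
            · exact h
            · rw [h] at haw; omega
            · rw [h, ← hL1] at haw; omega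
          rw [hwe] at haw
          have hgap : Gap2 a (i - 3) := by
            refine ⟨haw, ?_, ?_, ?_⟩
            · rw [show i - 3 + 1 = i - 2 by ring]; omega
            · rw [show i - 3 + 2 = i - 1 by ring, show i - 1 = L by omega]; exact haL
            · rw [show i - 3 + 3 = i by ring]; exact hai
          obtain ⟨k, hk1, hk2, hk3, hk4⟩ := hI2 p (i - 3) hp hgap (by omega)
          refine ⟨k, hk1, by omega, ?_, ?_⟩
          · rw [hsame k (by omega) (by omega) (by omega) (by omega)]; exact hk3
          · rw [hsame (k + 1) (by omega) (by omega) (by omega) (by omega)]; exact hk4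
    -- pair finder on the right of a fragile pair
    have pairRight : ∀ q : ℤ, a i = 1 → a (i + 1) = 1 → Gap2 a q → R < q →
        ∃ k, i + 2 ≤ k ∧ k + 1 ≤ q ∧ 0 < c k ∧ 0 < c (k + 1) := by
      intro q h1i h1i1 hq hqR
      by_cases hr2 : 2 ≤ r
      · refine ⟨R - 1, by omega, by omega, cIntR (R - 1) (by omega) (by omega), ?_⟩
        rw [show R - 1 + 1 = R by ring, hcR]; norm_num
      · -- r = 1, R = i + 2
        by_cases h3 : 0 < a (i + 3)
        · refine ⟨i + 2, by omega, by omega, ?_, ?_⟩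
          · rw [show i + 2 = R by omega, hcR]; norm_num
          · rw [show i + 2 + 1 = i + 3 by ring,
              hsame (i + 3) (by omega) (by omega) (by omega) (by omega)]
            exact h3
        · obtain ⟨w, hw1, hw2, hw3, haw⟩ := hI1 (i + 1) q hai1 hq.1 (by omega)
          have hwe : w = i + 4 := by
            have hR1 : R = i + 2 := by omega
            have : w = i + 2 ∨ w = i + 3 ∨ w = i + 4 := by omega
            rcases this with h | h | h
            · rw [h, ← hR1] at haw; omega
            · rw [h] at haw; omega
            · exact h
          rw [hwe] at haw
          have hgap : Gap2 a (i + 1) := by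
            refine ⟨hai1, ?_, ?_, ?_⟩
            · rw [show i + 1 + 1 = i + 2 by ring, show i + 2 = R by omega]; exact haR
            · rw [show i + 1 + 2 = i + 3 by ring]; omega
            · rw [show i + 1 + 3 = i + 4 by ring]; exact haw
          obtain ⟨k, hk1, hk2, hk3, hk4⟩ := hI2 (i + 1) q hgap hq (by omega)
          refine ⟨k, by omega, hk2, ?_, ?_⟩
          · rw [hsame k (by omega) (by omega) (by omega) (by omega)]; exact hk3
          · rw [hsame (k + 1) (by omega) (by omega) (by omega) (by omega)]; exact hk4
    intro p q hp hq hpq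
    rcases gapC p hp with ⟨hpe, hA, hB⟩ | ⟨hpA, hpside⟩
    · -- p is the new gap at i - 1
      rcases gapC q hq with ⟨hqe, _, _⟩ | ⟨hqA, hqside⟩
      · omega
      · rcases hqside with hqL | hqR
        · omega
        · obtain ⟨k, h1', h2', h3', h4'⟩ := pairRight q hA hB hqA hqR
          exact ⟨k, by omega, h2', h3', h4'⟩
    · rcases gapC q hq with ⟨hqe, hA, hB⟩ | ⟨hqA, hqside⟩
      · -- q is the new gap at i - 1
        rcases hpside with hpL | hpR
        · obtain ⟨k, h1', h2', h3', h4'⟩ := pairLeft p hA hB hpA hpL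
          exact ⟨k, h1', by omega, h3', h4'⟩
        · omega
      · -- both gaps are old gaps
        obtain ⟨k, hk1, hk2, hk3, hk4⟩ := hI2 p q hpA hqA hpq
        by_cases hsurv : 0 < c k ∧ 0 < c (k + 1)
        · exact ⟨k, hk1, hk2, hsurv.1, hsurv.2⟩
        have hkc : k = i - 1 ∨ k = i ∨ k = i + 1 := by
          rcases Nat.eq_zero_or_pos (c k) with h0 | h0
          · rcases hczero k hk3 h0 with ⟨h, _⟩ | ⟨h, _⟩ <;> omega
          rcases Nat.eq_zero_or_pos (c (k + 1)) with h0' | h0'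
          · rcases hczero (k + 1) hk4 h0' with ⟨h, _⟩ | ⟨h, _⟩ <;> omega
          · exact absurd ⟨h0, h0'⟩ hsurv
        rcases hkc with hk | hk | hk
        · -- k = i - 1 : a (i-1) > 0 so ℓ ≥ 2, use (i-2, i-1)
          rw [hk] at hk1 hk2 hk3 hk4
          have hL2 : L ≤ i - 2 := by
            rcases eq_or_lt_of_le (show L ≤ i - 1 by omega) with h | h
            · rw [h] at haL; omega
            · omega
          have hpb : p + 3 ≤ i - 2 := by
            by_contra h
            have he : p + 2 = i - 2 := by omega
            have hz := hp.2.2.1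
            rw [he] at hz
            have := occL (i - 2) hL2 (by omega)
            omega
          refine ⟨i - 2, hpb, by omega, occL (i - 2) hL2 (by omega), ?_⟩
          rw [show i - 2 + 1 = i - 1 by ring]
          exact occL (i - 1) (by omega) (by omega)
        · -- k = i
          rw [hk] at hk1 hk2 hk3 hk4
          by_cases hA : a i = 1
          · by_cases hB : a (i + 1) = 1
            · rcases hpside with hpL | hpR
              · obtain ⟨k', h1', h2', h3', h4'⟩ := pairLeft p hA hB hpA hpL
                exact ⟨k', h1', by omega, h3', h4'⟩
              · omega
            · -- a (i+1) ≥ 2 : use (i+1, i+2)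
              have hc1 : 0 < c (i + 1) := by omega
              have hc2 : 0 < c (i + 2) := occR (i + 2) (by omega) (by omega)
              have hq2 : i + 2 < q := by
                by_contra h
                have he : q + 1 = i + 2 := by omega
                have hz := hq.2.1
                rw [he] at hz
                omega
              refine ⟨i + 1, by omega, by omega, hc1, ?_⟩
              rw [show i + 1 + 1 = i + 2 by ring]; exact hc2
          · -- a i ≥ 2 : use (i-1, i)
            have hc0 : 0 < c i := by omega
            have hc1 : 0 < c (i - 1) := occL (i - 1) (by omega) (by omega)
            have hpb : p + 3 ≤ i - 1 := by
              by_contra h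
              have he : p + 2 = i - 1 := by omega
              have hz := hp.2.2.1
              rw [he] at hz
              omega
            refine ⟨i - 1, hpb, by omega, hc1, ?_⟩
            rw [show i - 1 + 1 = i by ring]; exact hc0
        · -- k = i + 1 : a (i+2) > 0 so r ≥ 2, use (i+2, i+3)
          rw [hk] at hk1 hk2 hk3 hk4
          rw [show i + 1 + 1 = i + 2 by ring] at hk4
          have hr2 : 2 ≤ r := by
            by_contra h
            have hRe : R = i + 2 := by omega
            rw [← hRe] at hk4
            omega
          have hc2 : 0 < c (i + 2) := occR (i + 2) (by omega) (by omega)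
          have hc3 : 0 < c (i + 3) := occR (i + 3) (by omega) (by omega)
          have hq3 : i + 3 ≤ q := by
            by_contra h
            have he : q + 1 = i + 3 := by omega
            have hz := hq.2.1
            rw [he] at hz
            omega
          refine ⟨i + 2, by omega, by omega, hc2, ?_⟩
          rw [show i + 2 + 1 = i + 3 by ring]; exact hc3

lemma reaches_inv {a b : ℤ →₀ ℕ} (ha : VInv a) (hab : Reaches a b) : VInv b := by
  induction hab with
  | refl => exact ha
  | tail h1 h2 ih =>
    obtain ⟨i, ℓ, r, hm⟩ := h2
    exact move_inv hm ih

/-- In any state reachable from a clusteron, between any two distinct gaps of size 2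
there is at least one pair of adjacently occupied rooms. -/
theorem adjacent_pair_between_two_gaps (a b : ℤ →₀ ℕ)
    (ha : IsClusteron a) (hab : Reaches a b) :
    ∀ i j : ℤ, HasGap b i 2 → HasGap b j 2 → i < j →
      ∃ k : ℤ, i + 3 ≤ k ∧ k + 1 ≤ j ∧ 0 < b k ∧ 0 < b (k + 1) := by
  intro p q hp hq hpq
  have hb : VInv b := reaches_inv (clusteron_inv ha) hab
  exact hb.2 p q ((gap2_iff b p).1 hp) ((gap2_iff b q).1 hq) hpq
end

section
/- If a final state of N violinists has its leftmost violinist in room r and its single 2-gap between the k-th and (k+1)-st occupied rooms (all other gaps of size 1), then its centroid equals r + N − k/N. Consequently, distinct final states have distinct centroids. -/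
/-!
The `j`-th room of `shadow N k p` is `p + (2j + 1)`, shifted down by one for the `k` rooms
before the 2-gap, so the rooms sum to `N p + N² - k` and the centroid is `p + N - k/N`.
Equal centroids then give `r N - k = r' N - k'`, and since `0 ≤ k, k' < N` this pins down
`r` and `k` as in Euclidean division.
-/

open Finset hiding shadow

theorem sum_range_two_mul_add_one {R : Type*} [CommSemiring R] (n : ℕ) :
    ∑ i ∈ range n, (2 * i + 1 : R) = n ^ 2 := by
  induction n with
  | zero => simp
  | succ n ih => rw [sum_range_succ, ih]; push_cast; ring

theorem range_filter_lt_of_le {k n : ℕ} (h : k ≤ n) : {j ∈ range n | j < k} = range k := by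
  ext j
  simp only [mem_filter, mem_range]
  omega

theorem shadow_injOn (N k : ℕ) (p : ℤ) :
    Set.InjOn (fun j : ℕ => if j < k then p + 2 * j else p + 2 * j + 1) (range N) := by
  intro a _ b _ h
  simp only at h
  split_ifs at h <;> omega

theorem card_shadow (N k : ℕ) (p : ℤ) : #(shadow N k p) = N := by
  rw [shadow, card_image_of_injOn (shadow_injOn N k p), card_range]

theorem sum_shadow {N k : ℕ} (p : ℤ) (hk : k ≤ N) :
    ∑ x ∈ shadow N k p, (x : ℚ) = N * p + N ^ 2 - k := by
  have room_eq (j : ℕ) : ((if j < k then p + 2 * j else p + 2 * j + 1 : ℤ) : ℚ)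
      = p + (2 * j + 1) - if j < k then 1 else 0 := by
    split_ifs <;> push_cast <;> ring
  rw [shadow, sum_image (shadow_injOn N k p)]
  simp only [room_eq, sum_sub_distrib, sum_add_distrib (f := fun _ => (p : ℚ)), sum_const,
    card_range, nsmul_eq_mul, sum_range_two_mul_add_one, sum_boole, range_filter_lt_of_le hk]

theorem centroidF_shadow {N k : ℕ} (p : ℤ) (hk : k ≤ N) (hN : N ≠ 0) :
    centroidF (shadow N k p) = p + N - k / N := by
  rw [centroidF, sum_shadow p hk, card_shadow]
  field_simp

theorem eq_and_eq_of_mul_sub_eq_mul_sub {N k k' r r' : ℤ} (hk : 0 ≤ k) (hkN : k < N)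
    (hk' : 0 ≤ k') (hk'N : k' < N) (h : r * N - k = r' * N - k') : k = k' ∧ r = r' := by
  have hdvd : N ∣ k - k' := ⟨r - r', by linear_combination -h⟩
  have hdiff : k - k' = 0 :=
    Int.eq_zero_of_abs_lt_dvd hdvd (abs_sub_lt_iff.2 ⟨by omega, by omega⟩)
  refine ⟨by omega, ?_⟩
  have hprod : (r - r') * N = 0 := by linear_combination h + hdiff
  have hr : r - r' = 0 := (mul_eq_zero.1 hprod).resolve_right (by omega)
  omega

/-- The centroid of the final state with leftmost violinist at `r` and the 2-gap after
the `k`-th occupied room equals `r + N - k/N`; consequently distinct final states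
have distinct centroids. -/
theorem centroid_final_state (N k : ℕ) (r : ℤ) (hk1 : 1 ≤ k) (hk2 : k ≤ N - 1) :
    centroidF (shadow N k r) = (r : ℚ) + (N : ℚ) - (k : ℚ) / (N : ℚ) ∧
    ∀ (k' : ℕ) (r' : ℤ), 1 ≤ k' → k' ≤ N - 1 →
      centroidF (shadow N k r) = centroidF (shadow N k' r') → k = k' ∧ r = r' := by
  have hN : N ≠ 0 := by omega
  refine ⟨centroidF_shadow r (by omega) hN, fun k' r' _ hk'2 heq => ?_⟩
  rw [centroidF_shadow r (by omega) hN, centroidF_shadow r' (by omega) hN] at heq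
  have hNq : (N : ℚ) ≠ 0 := by exact_mod_cast hN
  have hrat : (r : ℚ) * N - k = r' * N - k' := by
    field_simp at heq
    linarith
  have hint : r * (N : ℤ) - k = r' * N - k' := by exact_mod_cast hrat
  obtain ⟨hkk, hrr⟩ :=
    eq_and_eq_of_mul_sub_eq_mul_sub (by positivity) (by omega) (by positivity) (by omega) hint
  exact ⟨by exact_mod_cast hkk, hrr⟩
end

section
/- In any state propagated from a flat clusteron of N violinists initially occupying rooms 0 through N−1, no violinist ever occupies a room to the left of room −(N−1) or to the right of room 2N−2; that is, under the chip-pushing interpretation, each violinist moves at most N−1 rooms away from its starting room. -/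
/-!
Write `H_S(u) = 2 * #{s ∈ S | u ≤ s} + u`. For the flat clusteron `H_S(u) ≥ N + 1` at every
occupied room `u`, and this survives every move. A move empties an adjacent pair `i, i + 1` inside
a maximal run `d < x < e` of occupied rooms and occupies `d` and `e`; `H` does not decrease
outside `[d, e]` nor at the occupied rooms right of the pair, while at `e` and at the rooms
`d, …, i - 1` it is at least `H_S(e - 1)`. As the number of violinists stays `N`, every occupied
`u` satisfies `N + 1 ≤ 2N + u`. The upper bound is the lower bound for the mirror image
`x ↦ N - 1 - x`, which maps moves to moves and fixes the flat clusteron.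
-/

open Finset

def occupiedFrom (S : Finset ℤ) (u : ℤ) : ℕ := #(S.filter (u ≤ ·))

def RightWeighted (K : ℤ) (S : Finset ℤ) : Prop := ∀ u ∈ S, K ≤ 2 * (occupiedFrom S u : ℤ) + u

lemma mem_image_const_sub {S : Finset ℤ} {c x : ℤ} : x ∈ S.image (c - ·) ↔ c - x ∈ S := by
  simp only [mem_image]
  exact ⟨fun ⟨y, hy, hxy⟩ => by simpa [← hxy] using hy, fun h => ⟨c - x, h, by ring⟩⟩

lemma occupiedFrom_le_card (S : Finset ℤ) (u : ℤ) : occupiedFrom S u ≤ #S :=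
  card_filter_le _ _

lemma occupiedFrom_insert {S : Finset ℤ} {a : ℤ} (ha : a ∉ S) (u : ℤ) :
    occupiedFrom (insert a S) u = occupiedFrom S u + if u ≤ a then 1 else 0 := by
  unfold occupiedFrom
  rw [filter_insert]
  split_ifs with h
  · exact card_insert_of_notMem fun h' => ha (mem_filter.1 h').1
  · rfl

lemma occupiedFrom_erase {S : Finset ℤ} {a : ℤ} (ha : a ∈ S) (u : ℤ) :
    occupiedFrom (S.erase a) u + (if u ≤ a then 1 else 0) = occupiedFrom S u := by
  unfold occupiedFrom
  rw [filter_erase]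
  split_ifs with h
  · exact card_erase_add_one (mem_filter.2 ⟨ha, h⟩)
  · rw [erase_eq_of_notMem fun h' => h (mem_filter.1 h').2, add_zero]

lemma occupiedFrom_of_notMem {S : Finset ℤ} {a : ℤ} (ha : a ∉ S) :
    occupiedFrom S a = occupiedFrom S (a + 1) := by
  unfold occupiedFrom
  congr 1
  ext x
  simp only [mem_filter]
  constructor
  · rintro ⟨hx, hax⟩
    exact ⟨hx, lt_of_le_of_ne hax fun h => ha (h ▸ hx)⟩
  · rintro ⟨hx, hax⟩
    exact ⟨hx, by omega⟩

lemma occupiedFrom_of_Ico_subset {S : Finset ℤ} {u v : ℤ} (huv : u ≤ v) (hrun : Ico u v ⊆ S) :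
    (occupiedFrom S u : ℤ) = occupiedFrom S v + (v - u) := by
  have hsplit : S.filter (u ≤ ·) = S.filter (v ≤ ·) ∪ Ico u v := by
    ext x
    simp only [mem_filter, mem_union, mem_Ico]
    constructor
    · rintro ⟨hx, hux⟩
      by_cases hvx : v ≤ x
      · exact Or.inl ⟨hx, hvx⟩
      · exact Or.inr ⟨hux, by omega⟩
    · rintro (⟨hx, hvx⟩ | hx)
      · exact ⟨hx, by omega⟩
      · exact ⟨hrun (mem_Ico.2 hx), hx.1⟩
  have hdisj : Disjoint (S.filter (v ≤ ·)) (Ico u v) :=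
    disjoint_left.2 fun x hx hx' => by
      simp only [mem_filter, mem_Ico] at hx hx'
      omega
  unfold occupiedFrom
  rw [hsplit, card_union_of_disjoint hdisj, Nat.cast_add, Int.card_Ico_of_le _ _ huv]

lemma fMove_iff_run {S T : Finset ℤ} :
    FMove S T ↔ ∃ d i e : ℤ, d < i ∧ i + 1 < e ∧ d ∉ S ∧ e ∉ S ∧ Ioo d e ⊆ S ∧
      T = insert d (insert e ((S.erase i).erase (i + 1))) := by
  constructor
  · rintro ⟨i, ℓ, r, hℓ, hr, hi, hi1, hleft, hd, hright, he, rfl⟩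
    refine ⟨i - ℓ, i, i + 1 + r, by omega, by omega, hd, he, fun x hx => ?_, rfl⟩
    rw [mem_Ioo] at hx
    rcases lt_trichotomy x i with hxi | rfl | hxi
    · simpa using hleft (i - x) (by omega) (by omega)
    · exact hi
    · obtain rfl | hxi1 := eq_or_lt_of_le (Int.add_one_le_of_lt hxi)
      · exact hi1
      · simpa using hright (x - i) (by omega) (by omega)
  · rintro ⟨d, i, e, hdi, hie, hd, he, hrun, rfl⟩
    have hrun' : ∀ x, d < x → x < e → x ∈ S := fun x h1 h2 => hrun (mem_Ioo.2 ⟨h1, h2⟩)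
    refine ⟨i, i - d, e - i - 1, by omega, by omega, hrun' _ (by omega) (by omega),
      hrun' _ (by omega) (by omega), fun j _ _ => hrun' _ (by omega) (by omega), by simpa using hd,
      fun j _ _ => hrun' _ (by omega) (by omega), by simpa using he, by congr 1 <;> ring_nf⟩

namespace FMove

variable {S T : Finset ℤ}

lemma card_eq (hm : FMove S T) : #T = #S := by
  obtain ⟨d, i, e, hdi, hie, hd, he, hrun, rfl⟩ := fMove_iff_run.1 hm
  have hi : i ∈ S := hrun (mem_Ioo.2 ⟨hdi, by omega⟩)
  have hi1 : i + 1 ∈ S.erase i := mem_erase.2 ⟨by omega, hrun (mem_Ioo.2 ⟨by omega, hie⟩)⟩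
  have he' : e ∉ (S.erase i).erase (i + 1) := fun h => he (mem_of_mem_erase (mem_of_mem_erase h))
  have hd' : d ∉ insert e ((S.erase i).erase (i + 1)) := by
    rw [mem_insert, not_or]
    exact ⟨by omega, fun h => hd (mem_of_mem_erase (mem_of_mem_erase h))⟩
  rw [card_insert_of_notMem hd', card_insert_of_notMem he', card_erase_of_mem hi1,
    card_erase_of_mem hi]
  have := card_pos.2 ⟨i + 1, hi1⟩
  rw [card_erase_of_mem hi] at this
  omega

lemma image_const_sub (hm : FMove S T) (c : ℤ) : FMove (S.image (c - ·)) (T.image (c - ·)) := by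
  obtain ⟨d, i, e, hdi, hie, hd, he, hrun, rfl⟩ := fMove_iff_run.1 hm
  refine fMove_iff_run.2 ⟨c - e, c - i - 1, c - d, by omega, by omega, ?_, ?_, ?_, ?_⟩
  · simpa [mem_image_const_sub] using he
  · simpa [mem_image_const_sub] using hd
  · intro x hx
    rw [mem_Ioo] at hx
    exact mem_image_const_sub.2 (hrun (mem_Ioo.2 ⟨by omega, by omega⟩))
  · ext x
    simp only [mem_image_const_sub, mem_insert, mem_erase]
    grind

lemma occupiedFrom_move {S : Finset ℤ} {d i e : ℤ} (hdi : d < i) (hie : i + 1 < e) (hd : d ∉ S)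
    (he : e ∉ S) (hrun : Ioo d e ⊆ S) (u : ℤ) :
    occupiedFrom (insert d (insert e ((S.erase i).erase (i + 1)))) u
        + (if u ≤ i + 1 then 1 else 0) + (if u ≤ i then 1 else 0) =
      occupiedFrom S u + (if u ≤ e then 1 else 0) + (if u ≤ d then 1 else 0) := by
  have hi : i ∈ S := hrun (mem_Ioo.2 ⟨hdi, by omega⟩)
  have hi1 : i + 1 ∈ S.erase i := mem_erase.2 ⟨by omega, hrun (mem_Ioo.2 ⟨by omega, hie⟩)⟩
  have he' : e ∉ (S.erase i).erase (i + 1) := fun h => he (mem_of_mem_erase (mem_of_mem_erase h))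
  have hd' : d ∉ insert e ((S.erase i).erase (i + 1)) := by
    rw [mem_insert, not_or]
    exact ⟨by omega, fun h => hd (mem_of_mem_erase (mem_of_mem_erase h))⟩
  rw [occupiedFrom_insert hd', occupiedFrom_insert he', ← occupiedFrom_erase hi,
    ← occupiedFrom_erase hi1]
  ring

lemma rightWeighted {K : ℤ} (hm : FMove S T) (hS : RightWeighted K S) : RightWeighted K T := by
  obtain ⟨d, i, e, hdi, hie, hd, he, hrun, rfl⟩ := fMove_iff_run.1 hm
  have hinner : ∀ u, d < u → u ≤ e → (occupiedFrom S u : ℤ) = occupiedFrom S e + (e - u) :=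
    fun u hdu hue => occupiedFrom_of_Ico_subset hue fun x hx => by
      rw [mem_Ico] at hx
      exact hrun (mem_Ioo.2 ⟨by omega, hx.2⟩)
  have hlast : K + 1 ≤ 2 * (occupiedFrom S e : ℤ) + 2 + e := by
    have := hS (e - 1) (hrun (mem_Ioo.2 ⟨by omega, by omega⟩))
    rw [hinner (e - 1) (by omega) (by omega)] at this
    omega
  intro u hu
  have hcount := occupiedFrom_move hdi hie hd he hrun u
  simp only [mem_insert, mem_erase] at hu
  rcases hu with rfl | rfl | ⟨hui1, hui, huS⟩
  · have := hinner (u + 1) (by omega) (by omega)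
    rw [occupiedFrom_of_notMem hd] at hcount
    split_ifs at hcount <;> omega
  · split_ifs at hcount <;> omega
  · have hud : u ≠ d := fun h => hd (h ▸ huS)
    have hue : u ≠ e := fun h => he (h ▸ huS)
    have := hS u huS
    by_cases hleft : d < u ∧ u < i
    · have := hinner u hleft.1 (by omega)
      split_ifs at hcount <;> omega
    · split_ifs at hcount <;> omega

end FMove

lemma rightWeighted_Icc (a b : ℤ) : RightWeighted (b + 2) (Icc a b) := by
  intro u hu
  rw [mem_Icc] at hu
  have hcount : occupiedFrom (Icc a b) u = occupiedFrom (Icc a b) (b + 1) + (b + 1 - u) :=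
    occupiedFrom_of_Ico_subset (by omega) fun x hx => by
      rw [mem_Ico] at hx
      exact mem_Icc.2 ⟨by omega, by omega⟩
  omega

lemma RightWeighted.le_of_mem {K : ℤ} {S : Finset ℤ} (hS : RightWeighted K S) {u : ℤ}
    (hu : u ∈ S) : K - 2 * #S ≤ u := by
  have := hS u hu
  have := occupiedFrom_le_card S u
  omega

namespace FReaches

variable {S T : Finset ℤ}

lemma card_eq (h : FReaches S T) : #T = #S := by
  induction h with
  | refl => rfl
  | tail _ hm ih => rw [hm.card_eq, ih]

lemma rightWeighted {K : ℤ} (h : FReaches S T) (hS : RightWeighted K S) : RightWeighted K T := by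
  induction h with
  | refl => exact hS
  | tail _ hm ih => exact hm.rightWeighted ih

lemma image_const_sub (h : FReaches S T) (c : ℤ) :
    FReaches (S.image (c - ·)) (T.image (c - ·)) :=
  Relation.ReflTransGen.lift (image (c - ·)) (fun _ _ hm => FMove.image_const_sub hm c) _ _ h

end FReaches

lemma image_const_sub_Icc (a b : ℤ) : (Icc a b).image ((a + b) - ·) = Icc a b := by
  ext x
  rw [mem_image_const_sub, mem_Icc, mem_Icc]
  omega

lemma neg_le_of_reaches_Icc {N : ℕ} {S : Finset ℤ} (h : FReaches (Icc (0 : ℤ) ((N : ℤ) - 1)) S)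
    {x : ℤ} (hx : x ∈ S) : -((N : ℤ) - 1) ≤ x := by
  have := (h.rightWeighted (rightWeighted_Icc _ _)).le_of_mem hx
  rw [h.card_eq, Int.card_Icc] at this
  omega

theorem flat_clusteron_position_bound_general (N : ℕ) (S : Finset ℤ)
    (h : FReaches (Finset.Icc (0 : ℤ) ((N : ℤ) - 1)) S) :
    ∀ x ∈ S, -((N : ℤ) - 1) ≤ x ∧ x ≤ 2 * (N : ℤ) - 2 := by
  intro x hx
  have hreflect := h.image_const_sub (0 + ((N : ℤ) - 1))
  rw [image_const_sub_Icc] at hreflect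
  have hmem : (N : ℤ) - 1 - x ∈ S.image ((0 + ((N : ℤ) - 1)) - ·) :=
    mem_image_const_sub.2 (by rwa [zero_add, sub_sub_cancel])
  have := neg_le_of_reaches_Icc hreflect hmem
  exact ⟨neg_le_of_reaches_Icc h hx, by omega⟩

/-- Starting from the flat clusteron occupying rooms `0,…,N-1`, in any reachable state
no violinist is left of room `-(N-1)` or right of room `2N-2`. -/
theorem flat_clusteron_position_bound (N : ℕ) (hN : 1 ≤ N) (S : Finset ℤ)
    (h : FReaches (Finset.Icc (0 : ℤ) ((N : ℤ) - 1)) S) :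
    ∀ x ∈ S, -((N : ℤ) - 1) ≤ x ∧ x ≤ 2 * (N : ℤ) - 2 :=
  flat_clusteron_position_bound_general N S h
end

section
/- If a state consists of a violinist in room k together with a final shadow F_{N,r} (N singly-occupied rooms with the 2-gap after the r-th occupied room) whose leftmost violinist is in room k+1, then there is a unique reachable final state, namely the shadow F_{N+1,r} with leftmost violinist in room k−1. -/
namespace VAux


def f (r : ℕ) (k : ℤ) (m j : ℕ) : ℤ :=
  if j < m then k - 1 + 2 * j else if j = m then k + 2 * m
  else if j ≤ r then k + 2 * j - 1 else k + 2 * j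

def St (N r : ℕ) (k : ℤ) (m : ℕ) : Finset ℤ := (Finset.range (N + 1)).image (f r k m)

lemma fval (r : ℕ) (k : ℤ) (m j : ℕ) (y : ℤ)
    (h1 : j < m → y = k - 1 + 2 * j) (h2 : j = m → y = k + 2 * m)
    (h3 : m < j → j ≤ r → y = k + 2 * j - 1) (h4 : m < j → r < j → y = k + 2 * j) :
    f r k m j = y := by
  unfold f
  split_ifs with g1 g2 g3
  · exact (h1 g1).symm
  · exact (h2 g2).symm
  · exact (h3 (by omega) g3).symm
  · exact (h4 (by omega) (by omega)).symm

lemma mem_St {N r m : ℕ} {k x : ℤ} (hm : m ≤ r) (hrN : r < N) :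
    x ∈ St N r k m ↔ (∃ j : ℕ, j < m ∧ x = k - 1 + 2 * j) ∨ x = k + 2 * m ∨
      (∃ j : ℕ, m < j ∧ j ≤ r ∧ x = k + 2 * j - 1) ∨
      (∃ j : ℕ, r < j ∧ j ≤ N ∧ x = k + 2 * j) := by
  simp only [St, Finset.mem_image, Finset.mem_range]
  constructor
  · rintro ⟨j, hj, rfl⟩
    unfold f
    split_ifs with h1 h2 h3
    · exact Or.inl ⟨j, h1, rfl⟩
    · exact Or.inr (Or.inl rfl)
    · exact Or.inr (Or.inr (Or.inl ⟨j, by omega, h3, rfl⟩))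
    · exact Or.inr (Or.inr (Or.inr ⟨j, by omega, by omega, rfl⟩))
  · rintro (⟨j, hj, rfl⟩ | rfl | ⟨j, hj1, hj2, rfl⟩ | ⟨j, hj1, hj2, rfl⟩)
    · exact ⟨j, by omega, fval _ _ _ _ _ (fun _ => rfl) (by omega) (by omega) (by omega)⟩
    · exact ⟨m, by omega, fval _ _ _ _ _ (by omega) (fun _ => rfl) (by omega) (by omega)⟩
    · exact ⟨j, by omega, fval _ _ _ _ _ (by omega) (by omega) (fun _ _ => rfl) (by omega)⟩
    · exact ⟨j, by omega, fval _ _ _ _ _ (by omega) (by omega) (by omega) (fun _ _ => rfl)⟩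

lemma St_zero {N r : ℕ} {k : ℤ} (hrN : r < N) :
    St N r k 0 = insert k (shadow N r (k + 1)) := by
  ext x
  simp only [St, shadow, Finset.mem_insert, Finset.mem_image, Finset.mem_range]
  constructor
  · rintro ⟨j, hj, rfl⟩
    rcases Nat.eq_zero_or_pos j with rfl | hj0
    · left; unfold f; norm_num
    · right
      refine ⟨j - 1, by omega, ?_⟩
      rw [fval r k 0 j (if j - 1 < r then k + 1 + 2 * ↑(j - 1) else k + 1 + 2 * ↑(j - 1) + 1)]
      · omega
      · intro h; split_ifs <;> push_cast <;> omega
      · intro _ h; split_ifs <;> push_cast <;> omega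
      · intro _ h; split_ifs <;> push_cast <;> omega
  · rintro (rfl | ⟨j, hj, rfl⟩)
    · exact ⟨0, by omega, fval _ _ _ _ _ (by omega) (fun _ => by norm_num) (by omega) (by omega)⟩
    · refine ⟨j + 1, by omega, ?_⟩
      apply fval <;> intro h <;> try intro h'
      · omega
      · omega
      · split_ifs <;> push_cast <;> omega
      · split_ifs <;> push_cast <;> omega

lemma St_r {N r : ℕ} {k : ℤ} (hrN : r < N) :
    St N r k r = shadow (N + 1) r (k - 1) := by
  ext x
  simp only [St, shadow, Finset.mem_image, Finset.mem_range]
  constructor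
  · rintro ⟨j, hj, rfl⟩
    refine ⟨j, hj, ?_⟩
    rw [fval r k r j (if j < r then k - 1 + 2 * (j:ℤ) else k - 1 + 2 * (j:ℤ) + 1)] <;>
      intro h <;> try intro h'
    all_goals split_ifs <;> omega
  · rintro ⟨j, hj, rfl⟩
    refine ⟨j, hj, ?_⟩
    apply fval <;> intro h <;> try intro h'
    all_goals split_ifs <;> omega


lemma mem_succ {N r m : ℕ} {k : ℤ} (hm : m < r) (hrN : r < N) :
    k + 2 * m ∈ St N r k m ∧ k + 2 * m + 1 ∈ St N r k m ∧
    k + 2 * m - 1 ∉ St N r k m ∧ k + 2 * m + 2 ∉ St N r k m := by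
  refine ⟨(mem_St hm.le hrN).2 (Or.inr (Or.inl rfl)),
    (mem_St hm.le hrN).2 (Or.inr (Or.inr (Or.inl ⟨m + 1, by omega, by omega, by push_cast; ring⟩))),
    fun h => ?_, fun h => ?_⟩ <;>
  · rw [mem_St hm.le hrN] at h
    rcases h with ⟨j, h1, h2⟩ | h | ⟨j, h1, h2, h3⟩ | ⟨j, h1, h2, h3⟩ <;> omega

lemma StSucc {N r m : ℕ} {k : ℤ} (hm : m < r) (hrN : r < N) :
    St N r k (m + 1) = insert (k + 2 * m - 1)
      (insert (k + 2 * m + 1 + 1) (((St N r k m).erase (k + 2 * m)).erase (k + 2 * m + 1))) := by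
  ext x
  simp only [Finset.mem_insert, Finset.mem_erase]
  rw [mem_St (by omega) hrN, mem_St hm.le hrN]
  constructor
  · rintro (⟨j, hj, rfl⟩ | rfl | ⟨j, hj1, hj2, rfl⟩ | ⟨j, hj1, hj2, rfl⟩)
    · rcases eq_or_lt_of_le (Nat.lt_succ_iff.1 hj) with rfl | hjm
      · left; omega
      · right; right
        exact ⟨by omega, by omega, Or.inl ⟨j, hjm, rfl⟩⟩
    · right; left; push_cast; ring
    · right; right
      exact ⟨by omega, by omega, Or.inr (Or.inr (Or.inl ⟨j, by omega, by omega, rfl⟩))⟩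
    · right; right
      exact ⟨by omega, by omega, Or.inr (Or.inr (Or.inr ⟨j, hj1, hj2, rfl⟩))⟩
  · rintro (rfl | rfl | ⟨h1, h2, ⟨j, hj, rfl⟩ | rfl | ⟨j, hj1, hj2, rfl⟩ | ⟨j, hj1, hj2, rfl⟩⟩)
    · exact Or.inl ⟨m, by omega, by omega⟩
    · exact Or.inr (Or.inl (by push_cast; ring))
    · exact Or.inl ⟨j, by omega, rfl⟩
    · exact absurd rfl h2
    · rcases Nat.eq_or_lt_of_le (Nat.succ_le_of_lt hj1) with rfl | h
      · exact absurd (by push_cast; ring) h1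
      · refine Or.inr (Or.inr (Or.inl ⟨j, ?_, hj2, rfl⟩))
        omega
    · exact Or.inr (Or.inr (Or.inr ⟨j, hj1, hj2, rfl⟩))

lemma move_succ {N r m : ℕ} {k : ℤ} (hm : m < r) (hrN : r < N) :
    FMove (St N r k m) (St N r k (m + 1)) := by
  obtain ⟨h1, h2, h3, h4⟩ := mem_succ (N := N) (k := k) hm hrN
  exact ⟨k + 2 * m, 1, 1, le_refl _, le_refl _, h1, h2,
    fun j hj1 hj2 => absurd hj2 (by omega), by simpa using h3,
    fun j hj1 hj2 => absurd hj1 (by omega),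
    by rw [show k + 2 * (m : ℤ) + 1 + 1 = k + 2 * m + 2 by ring]; exact h4,
    StSucc hm hrN⟩

lemma move_unique {N r m : ℕ} {k : ℤ} {T : Finset ℤ} (hm : m < r) (hrN : r < N)
    (hmv : FMove (St N r k m) T) : T = St N r k (m + 1) := by
  obtain ⟨i, ℓ, rr, hℓ, hrr, hi, hi1, hL, hLn, hR, hRn, rfl⟩ := hmv
  obtain ⟨m1, m2, m3, m4⟩ := mem_succ (N := N) (k := k) hm hrN
  have hik : i = k + 2 * m := by
    rw [mem_St hm.le hrN] at hi hi1
    rcases hi with ⟨j, h1, h2⟩ | h | ⟨j, h1, h2, h3⟩ | ⟨j, h1, h2, h3⟩ <;>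
      rcases hi1 with ⟨j', g1, g2⟩ | g | ⟨j', g1, g2, g3⟩ | ⟨j', g1, g2, g3⟩ <;> omega
  subst hik
  have hℓ1 : ℓ = 1 := by
    by_contra h
    exact m3 (by simpa using hL 1 (by omega) (by omega))
  have hrr1 : rr = 1 := by
    by_contra h
    exact m4 (by simpa using hR 2 (by omega) (by omega))
  subst hℓ1; subst hrr1
  rw [StSucc hm hrN]

lemma final_St_r {N r : ℕ} {k : ℤ} (hrN : r < N) : FIsFinal (St N r k r) := by
  rintro ⟨T, i, ℓ, rr, hℓ, hrr, hi, hi1, -, -, -, -, -⟩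
  rw [mem_St le_rfl hrN] at hi hi1
  rcases hi with ⟨j, h1, h2⟩ | h | ⟨j, h1, h2, h3⟩ | ⟨j, h1, h2, h3⟩ <;>
    rcases hi1 with ⟨j', g1, g2⟩ | g | ⟨j', g1, g2, g3⟩ | ⟨j', g1, g2, g3⟩ <;> omega


lemma reach_aux {N r : ℕ} {k : ℤ} (hrN : r < N) :
    ∀ m, m ≤ r → FReaches (St N r k 0) (St N r k m) := by
  intro m
  induction m with
  | zero => exact fun _ => Relation.ReflTransGen.refl
  | succ n ih => exact fun h => (ih (by omega)).tail (move_succ (by omega) hrN)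

lemma unique_aux {N r : ℕ} {k : ℤ} (hrN : r < N) :
    ∀ n m, r - m = n → m ≤ r → ∀ T, FReaches (St N r k m) T → FIsFinal T →
      T = St N r k r := by
  intro n
  induction n with
  | zero =>
    intro m hn hm T hT hfin
    obtain rfl : m = r := by omega
    rcases Relation.ReflTransGen.cases_head hT with rfl | ⟨U, hU, hUT⟩
    · rfl
    · exact absurd ⟨U, hU⟩ (final_St_r hrN)
  | succ n ih =>
    intro m hn hm T hT hfin
    have hmr : m < r := by omega
    rcases Relation.ReflTransGen.cases_head hT with rfl | ⟨U, hU, hUT⟩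
    · exact absurd ⟨_, move_succ hmr hrN⟩ hfin
    · rw [move_unique hmr hrN hU] at hUT
      exact ih (m + 1) (by omega) (by omega) T hUT hfin

end VAux

/-- A violinist in room `k` placed next to the shadow `F_{N,r}` with leftmost violinist
in room `k+1` leads to a unique reachable final state: `F_{N+1,r}` with leftmost
violinist in room `k-1`. -/
theorem violinist_next_to_shadow (N r : ℕ) (k : ℤ) (hr1 : 1 ≤ r) (hr2 : r ≤ N - 1) :
    (FReaches (insert k (shadow N r (k + 1))) (shadow (N + 1) r (k - 1)) ∧
      FIsFinal (shadow (N + 1) r (k - 1))) ∧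
    ∀ T : Finset ℤ, FReaches (insert k (shadow N r (k + 1))) T → FIsFinal T →
      T = shadow (N + 1) r (k - 1) := by
  have hrN : r < N := by omega
  refine ⟨⟨?_, ?_⟩, ?_⟩
  · rw [← VAux.St_zero (k := k) hrN, ← VAux.St_r (k := k) hrN]
    exact VAux.reach_aux hrN r le_rfl
  · rw [← VAux.St_r (k := k) hrN]
    exact VAux.final_St_r hrN
  · intro T hT hfin
    rw [← VAux.St_zero (k := k) hrN] at hT
    rw [← VAux.St_r (k := k) hrN]
    exact VAux.unique_aux hrN (r - 0) 0 rfl (by omega) T hT hfin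
end

section
/- If the shadow F_{N1,x} is placed immediately to the left of and adjacent to the shadow F_{N2,y} (leftmost rooms at positions 0 and 2·N1 respectively), then the centroid of this combined state equals (N1+N2) − (x+y)/(N1+N2); hence any final state reached from it has shadow F_{N1+N2, x+y}. -/
/-! Label the violinists of a state from the left by `0, 1, 2, …`. In both shadows, and hence
in their juxtaposition, violinist `j` sits in room `2j` or `2j+1`, so the state is determined by
its size `n` and the set `D` of violinists in odd rooms (`packedState n D`). In such a state the
only adjacent pairs are rooms `2j+1, 2j+2` with `j ∈ D`, `j+1 ∉ D`, and the move sends them to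
`2j, 2j+3`: it replaces `j` by `j+1` in `D`. Hence the class is closed under moves and `|D|` is
invariant (the room sum is `n(n-1) + |D|`, which gives the centroid), and a state is final exactly
when `D = {k, …, n-1}`, i.e. when it is the shadow `F_{n,k}` with `k = n - |D| = x + y`. -/

open Finset hiding shadow

def packedRoom (D : Finset ℕ) (j : ℕ) : ℤ := 2 * j + if j ∈ D then 1 else 0

def packedState (n : ℕ) (D : Finset ℕ) : Finset ℤ := (range n).image (packedRoom D)

section PackedRoom

variable {D : Finset ℕ} {j k : ℕ}

lemma packedRoom_of_mem (h : j ∈ D) : packedRoom D j = 2 * j + 1 := by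
  simp [packedRoom, h]

lemma packedRoom_of_notMem (h : j ∉ D) : packedRoom D j = 2 * j := by
  simp [packedRoom, h]

lemma packedRoom_bounds (D : Finset ℕ) (j : ℕ) :
    2 * (j : ℤ) ≤ packedRoom D j ∧ packedRoom D j ≤ 2 * j + 1 := by
  unfold packedRoom; split_ifs <;> omega

lemma packedRoom_strictMono (D : Finset ℕ) : StrictMono (packedRoom D) :=
  strictMono_nat_of_lt_succ fun j => by
    have := packedRoom_bounds D j; have := packedRoom_bounds D (j + 1); push_cast at *; omega

lemma packedRoom_eq_two_mul_iff : packedRoom D k = 2 * j ↔ k = j ∧ j ∉ D := by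
  by_cases hk : k ∈ D
  · rw [packedRoom_of_mem hk]; constructor
    · omega
    · rintro ⟨rfl, h⟩; exact absurd hk h
  · rw [packedRoom_of_notMem hk]; constructor
    · intro h; obtain rfl : k = j := by omega
      exact ⟨rfl, hk⟩
    · rintro ⟨rfl, -⟩; rfl

lemma packedRoom_eq_two_mul_add_one_iff : packedRoom D k = 2 * j + 1 ↔ k = j ∧ j ∈ D := by
  by_cases hk : k ∈ D
  · rw [packedRoom_of_mem hk]; constructor
    · intro h; obtain rfl : k = j := by omega
      exact ⟨rfl, hk⟩
    · rintro ⟨rfl, -⟩; rfl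
  · rw [packedRoom_of_notMem hk]; constructor
    · omega
    · rintro ⟨rfl, h⟩; exact absurd h hk

lemma packedRoom_shift_of_ne (hkj : k ≠ j) (hkj' : k ≠ j + 1) :
    packedRoom (insert (j + 1) (D.erase j)) k = packedRoom D k := by
  simp [packedRoom, hkj, hkj']

end PackedRoom

section PackedState

variable {n : ℕ} {D : Finset ℕ} {j : ℕ}

lemma mem_packedState {a : ℤ} : a ∈ packedState n D ↔ ∃ j < n, packedRoom D j = a := by
  simp [packedState]

lemma two_mul_notMem_packedState (hj : j ∈ D) : 2 * (j : ℤ) ∉ packedState n D := by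
  rw [mem_packedState]
  rintro ⟨k, -, hk⟩
  exact (packedRoom_eq_two_mul_iff.1 hk).2 hj

lemma two_mul_add_three_notMem_packedState (hj : j + 1 ∉ D) :
    2 * (j : ℤ) + 3 ∉ packedState n D := by
  rw [mem_packedState]
  rintro ⟨k, -, hk⟩
  have hk' : packedRoom D k = 2 * ((j + 1 : ℕ) : ℤ) + 1 := by push_cast; omega
  exact hj (packedRoom_eq_two_mul_add_one_iff.1 hk').2

lemma card_packedState : (packedState n D).card = n := by
  rw [packedState, card_image_of_injective _ (packedRoom_strictMono D).injective, card_range]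

lemma sum_packedState (hD : D ⊆ range n) :
    ∑ a ∈ packedState n D, (a : ℚ) = n * (n - 1) + D.card := by
  rw [packedState, sum_image fun a _ b _ h => (packedRoom_strictMono D).injective h]
  simp only [packedRoom]
  push_cast
  rw [sum_add_distrib, ← mul_sum, sum_ite_mem, inter_eq_right.2 hD, sum_const, nsmul_one]
  congr 1
  clear hD
  induction n with
  | zero => simp
  | succ m ih => rw [sum_range_succ, mul_add, ih]; push_cast; ring

lemma packedState_shift (hj : j ∈ D) (hjn : j + 1 < n) (hj1 : j + 1 ∉ D) :
    insert (2 * j : ℤ) (insert (2 * j + 3 : ℤ)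
      (((packedState n D).erase (2 * j + 1 : ℤ)).erase (2 * j + 2 : ℤ)))
      = packedState n (insert (j + 1) (D.erase j)) := by
  ext a
  simp only [mem_insert, mem_erase, mem_packedState]
  constructor
  · rintro (rfl | rfl | ⟨ha2, ha1, k, hkn, rfl⟩)
    · exact ⟨j, by omega, packedRoom_eq_two_mul_iff.2 ⟨rfl, by simp⟩⟩
    · refine ⟨j + 1, hjn, ?_⟩
      rw [packedRoom_of_mem (mem_insert_self _ _)]; push_cast; ring
    · refine ⟨k, hkn, packedRoom_shift_of_ne ?_ ?_⟩
      · rintro rfl; exact ha1 (packedRoom_of_mem hj)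
      · rintro rfl; rw [packedRoom_of_notMem hj1] at ha2; push_cast at ha2; omega
  · rintro ⟨k, hkn, rfl⟩
    by_cases hkj : k = j
    · subst hkj; left; exact packedRoom_of_notMem (by simp)
    by_cases hkj' : k = j + 1
    · subst hkj'; right; left; rw [packedRoom_of_mem (mem_insert_self _ _)]; push_cast; ring
    rw [packedRoom_shift_of_ne hkj hkj']
    have h1 : packedRoom D k ≠ 2 * j + 1 := fun h => hkj (packedRoom_eq_two_mul_add_one_iff.1 h).1
    have h2 : packedRoom D k ≠ 2 * j + 2 := fun h =>
      hkj' (packedRoom_eq_two_mul_iff (D := D).1 (by push_cast; omega)).1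
    exact Or.inr (Or.inr ⟨h2, h1, k, hkn, rfl⟩)

lemma fMove_packedState_shift (hj : j ∈ D) (hjn : j + 1 < n) (hj1 : j + 1 ∉ D) :
    FMove (packedState n D) (packedState n (insert (j + 1) (D.erase j))) := by
  refine ⟨2 * j + 1, 1, 1, le_rfl, le_rfl, ?_, ?_, fun _ _ _ => by omega, ?_,
    fun _ _ _ => by omega, ?_, ?_⟩
  · exact mem_packedState.2 ⟨j, by omega, packedRoom_of_mem hj⟩
  · refine mem_packedState.2 ⟨j + 1, hjn, ?_⟩
    rw [packedRoom_of_notMem hj1]; push_cast; ring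
  · simpa using two_mul_notMem_packedState (n := n) hj
  · simpa [add_assoc] using two_mul_add_three_notMem_packedState (n := n) hj1
  · rw [← packedState_shift hj hjn hj1]; ring_nf

lemma exists_shift_of_fMove {T : Finset ℤ} (h : FMove (packedState n D) T) :
    ∃ j ∈ D, j + 1 < n ∧ j + 1 ∉ D ∧ T = packedState n (insert (j + 1) (D.erase j)) := by
  obtain ⟨i, ℓ, r, hℓ, hr, hi, hi1, hleft, -, hright, -, rfl⟩ := h
  obtain ⟨j, -, hij⟩ := mem_packedState.1 hi
  obtain ⟨k, hkn, hik⟩ := mem_packedState.1 hi1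
  have := packedRoom_bounds D j
  have := packedRoom_bounds D k
  obtain rfl : k = j + 1 := by
    rcases eq_or_ne k j with rfl | _ <;> omega
  push_cast at *
  obtain rfl : i = 2 * j + 1 := by omega
  have hj : j ∈ D := (packedRoom_eq_two_mul_add_one_iff.1 hij).2
  have hj1 : j + 1 ∉ D := fun hj1 => by rw [packedRoom_of_mem hj1] at hik; push_cast at hik; omega
  obtain rfl : ℓ = 1 := by
    by_contra hℓ1
    exact two_mul_notMem_packedState hj (by simpa using hleft 1 le_rfl (by omega))
  obtain rfl : r = 1 := by
    by_contra hr1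
    exact two_mul_add_three_notMem_packedState hj1
      (by simpa [add_assoc] using hright 2 le_rfl (by omega))
  refine ⟨j, hj, hkn, hj1, ?_⟩
  rw [← packedState_shift hj hkn hj1]; ring_nf

end PackedState

lemma FReaches.exists_eq_packedState {n : ℕ} {D : Finset ℕ} {T : Finset ℤ}
    (h : FReaches (packedState n D) T) (hD : D ⊆ range n) :
    ∃ D' ⊆ range n, D'.card = D.card ∧ T = packedState n D' := by
  induction h with
  | refl => exact ⟨D, hD, rfl, rfl⟩
  | tail _ hmove ih =>
    obtain ⟨D', hD', hcard, rfl⟩ := ih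
    obtain ⟨j, hj, hjn, hj1, rfl⟩ := exists_shift_of_fMove hmove
    refine ⟨_, insert_subset (mem_range.2 hjn) ((erase_subset _ _).trans hD'), ?_, rfl⟩
    rw [card_insert_of_notMem (by simp [hj1]), card_erase_add_one hj, hcard]

lemma Finset.eq_Ico_sub_card_of_succ_mem {D : Finset ℕ} {n : ℕ} (hD : D ⊆ range n)
    (hsucc : ∀ j ∈ D, j + 1 < n → j + 1 ∈ D) : D = Ico (n - D.card) n := by
  obtain rfl | hne := D.eq_empty_or_nonempty
  · simp
  set m := D.min' hne
  have hmn : m < n := mem_range.1 (hD (min'_mem D hne))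
  have hDm : D = Ico m n := by
    ext k
    rw [mem_Ico]
    refine ⟨fun hk => ⟨min'_le D k hk, mem_range.1 (hD hk)⟩, ?_⟩
    rintro ⟨hmk, hkn⟩
    induction k, hmk using Nat.le_induction with
    | base => exact min'_mem D hne
    | succ k hmk ih => exact hsucc k (ih (by omega)) hkn
  conv_rhs => rw [hDm, Nat.card_Ico, Nat.sub_sub_self hmn.le]
  exact hDm

lemma eq_Ico_of_fIsFinal_packedState {n : ℕ} {D : Finset ℕ} (hD : D ⊆ range n)
    (h : FIsFinal (packedState n D)) : D = Ico (n - D.card) n :=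
  eq_Ico_sub_card_of_succ_mem hD fun j hj hjn => by
    by_contra hj1
    exact h ⟨_, fMove_packedState_shift hj hjn hj1⟩

lemma centroidF_packedState {n : ℕ} {D : Finset ℕ} (hD : D ⊆ range n) :
    centroidF (packedState n D) = n - (n - D.card) / n := by
  rw [centroidF, sum_packedState hD, card_packedState]
  rcases eq_or_ne n 0 with rfl | hn
  · simp
  · field_simp; ring

lemma shadow_zero_eq_packedState (n k : ℕ) : shadow n k 0 = packedState n (Ico k n) := by
  refine image_congr fun j hj => ?_
  simp only [packedRoom, mem_Ico, zero_add]
  have := mem_range.1 hj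
  split_ifs <;> omega

lemma shadow_union_shadow_eq_packedState (N1 N2 x y : ℕ) :
    shadow N1 x 0 ∪ shadow N2 y (2 * (N1 : ℤ)) =
      packedState (N1 + N2) (Ico x N1 ∪ Ico (N1 + y) (N1 + N2)) := by
  rw [packedState, range_add_eq_union, image_union, map_eq_image, image_image]
  congr 1 <;> refine image_congr fun j hj => ?_ <;> have := mem_range.1 hj <;>
    simp only [packedRoom, Function.comp_apply, addLeftEmbedding_apply, mem_union, mem_Ico] <;>
    split_ifs <;> push_cast <;> omega

theorem merge_shadows_general (N1 N2 x y : ℕ)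
    (hx2 : x ≤ N1 - 1) (hy2 : y ≤ N2 - 1) :
    centroidF (shadow N1 x 0 ∪ shadow N2 y (2 * (N1 : ℤ))) =
      ((N1 : ℚ) + N2) - ((x : ℚ) + y) / ((N1 : ℚ) + N2) ∧
    ∀ T : Finset ℤ, FReaches (shadow N1 x 0 ∪ shadow N2 y (2 * (N1 : ℤ))) T →
      FIsFinal T → ∃ p : ℤ, T = shadow (N1 + N2) (x + y) p := by
  set D := Ico x N1 ∪ Ico (N1 + y) (N1 + N2)
  have hD : D ⊆ range (N1 + N2) := by
    intro j; simp only [D, mem_union, mem_Ico, mem_range]; omega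
  have hcard : D.card = N1 + N2 - (x + y) := by
    have hdisj : Disjoint (Ico x N1) (Ico (N1 + y) (N1 + N2)) :=
      disjoint_left.2 fun j hj hj' => by simp only [mem_Ico] at hj hj'; omega
    rw [card_union_of_disjoint hdisj, Nat.card_Ico, Nat.card_Ico]
    omega
  rw [shadow_union_shadow_eq_packedState]
  refine ⟨?_, fun T hT hfin => ?_⟩
  · rw [centroidF_packedState hD, hcard]
    push_cast [show x + y ≤ N1 + N2 by omega]
    ring
  · obtain ⟨D', hD', hcard', rfl⟩ := hT.exists_eq_packedState hD
    refine ⟨0, ?_⟩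
    rw [eq_Ico_of_fIsFinal_packedState hD' hfin, hcard', hcard, shadow_zero_eq_packedState,
      Nat.sub_sub_self (by omega)]

/-- Placing `F_{N₁,x}` immediately to the left of and adjacent to `F_{N₂,y}` gives a
state with centroid `(N₁+N₂) - (x+y)/(N₁+N₂)`; hence any final state reached from it
has shadow `F_{N₁+N₂, x+y}`. -/
theorem merge_shadows (N1 N2 x y : ℕ)
    (hx1 : 1 ≤ x) (hx2 : x ≤ N1 - 1) (hy1 : 1 ≤ y) (hy2 : y ≤ N2 - 1) :
    centroidF (shadow N1 x 0 ∪ shadow N2 y (2 * (N1 : ℤ))) =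
      ((N1 : ℚ) + N2) - ((x : ℚ) + y) / ((N1 : ℚ) + N2) ∧
    ∀ T : Finset ℤ, FReaches (shadow N1 x 0 ∪ shadow N2 y (2 * (N1 : ℤ))) T →
      FIsFinal T → ∃ p : ℤ, T = shadow (N1 + N2) (x + y) p :=
  merge_shadows_general N1 N2 x y hx2 hy2
end

section
/- An intermediate state reachable from a clusteron is locked-in (every sequence of future moves leaves the centroid unchanged) if and only if it is spacious, meaning it contains no run of three or more consecutively occupied rooms and every pair of runs of exactly two consecutive occupied rooms has at least one gap of size 2 between them. -/
/-- A maximal run of exactly two consecutive occupied rooms starting at `i`. -/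
def Run2 (S : Finset ℤ) (i : ℤ) : Prop :=
  i ∈ S ∧ i + 1 ∈ S ∧ i - 1 ∉ S ∧ i + 2 ∉ S

/-- A spacious state: no three consecutive occupied rooms, and between any two runs of
exactly two consecutive occupied rooms there is a gap of size 2. -/
def Spacious (S : Finset ℤ) : Prop :=
  (∀ i : ℤ, ¬(i ∈ S ∧ i + 1 ∈ S ∧ i + 2 ∈ S)) ∧
  ∀ i j : ℤ, Run2 S i → Run2 S j → i < j →
    ∃ m : ℤ, i + 1 < m ∧ m + 1 < j ∧ m ∉ S ∧ m + 1 ∉ S ∧ m - 1 ∈ S ∧ m + 2 ∈ S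

/-- A locked-in state: every sequence of future moves leaves the centroid unchanged. -/
def LockedIn (S : Finset ℤ) : Prop :=
  ∀ T : Finset ℤ, FReaches S T → centroidF T = centroidF S

section Aux
open Relation

variable {S T : Finset ℤ}

lemma memT {i a b x : ℤ} :
    x ∈ insert a (insert b ((S.erase i).erase (i+1))) ↔
      x = a ∨ x = b ∨ (x ∈ S ∧ x ≠ i ∧ x ≠ i + 1) := by
  simp only [Finset.mem_insert, Finset.mem_erase]
  tauto

lemma notT {i a b x : ℤ} (h1 : x ≠ a) (h2 : x ≠ b) (h3 : x ∉ S) :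
    x ∉ insert a (insert b ((S.erase i).erase (i+1))) := by
  rw [memT]; push_neg; exact ⟨h1, h2, fun h => absurd h h3⟩

lemma inT {i a b x : ℤ} (h1 : x ∈ S) (h2 : x ≠ i) (h3 : x ≠ i + 1) :
    x ∈ insert a (insert b ((S.erase i).erase (i+1))) := by
  rw [memT]; exact Or.inr (Or.inr ⟨h1, h2, h3⟩)

lemma mS : ∀ {x y : ℤ}, x ∈ S → x = y → y ∈ S := fun h e => e ▸ h

lemma mNS : ∀ {x y : ℤ}, x ∉ S → x = y → y ∉ S := fun h e => e ▸ h

lemma move_card {i a b : ℤ} (hi : i ∈ S) (hi1 : i + 1 ∈ S)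
    (ha : a ∉ S) (hb : b ∉ S) (hab : a ≠ b) :
    (insert a (insert b ((S.erase i).erase (i+1)))).card = S.card := by
  have h2 : i + 1 ∈ S.erase i := Finset.mem_erase.mpr ⟨by omega, hi1⟩
  have hc2 : 2 ≤ S.card := by
    have : ({i, i+1} : Finset ℤ) ⊆ S := by
      intro x hx; simp only [Finset.mem_insert, Finset.mem_singleton] at hx
      rcases hx with rfl | rfl <;> assumption
    calc 2 = ({i, i+1} : Finset ℤ).card := (Finset.card_pair (by omega)).symm
    _ ≤ S.card := Finset.card_le_card this
  have hbnot : b ∉ (S.erase i).erase (i+1) := fun h => hb (Finset.mem_of_mem_erase (Finset.mem_of_mem_erase h))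
  have hanot : a ∉ insert b ((S.erase i).erase (i+1)) := by
    simp only [Finset.mem_insert, Finset.mem_erase]
    push_neg
    exact ⟨hab, fun _ _ => ha⟩
  rw [Finset.card_insert_of_notMem hanot, Finset.card_insert_of_notMem hbnot,
    Finset.card_erase_of_mem h2, Finset.card_erase_of_mem hi]
  omega

lemma move_sum {i a b : ℤ} (hi : i ∈ S) (hi1 : i + 1 ∈ S)
    (ha : a ∉ S) (hb : b ∉ S) (hab : a ≠ b) :
    ∑ x ∈ insert a (insert b ((S.erase i).erase (i+1))), (x : ℚ)
      = (∑ x ∈ S, (x : ℚ)) - i - (i+1) + a + b := by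
  have h2 : i + 1 ∈ S.erase i := Finset.mem_erase.mpr ⟨by omega, hi1⟩
  have hbnot : b ∉ (S.erase i).erase (i+1) := fun h => hb (Finset.mem_of_mem_erase (Finset.mem_of_mem_erase h))
  have hanot : a ∉ insert b ((S.erase i).erase (i+1)) := by
    simp only [Finset.mem_insert, Finset.mem_erase]
    push_neg
    exact ⟨hab, fun _ _ => ha⟩
  rw [Finset.sum_insert hanot, Finset.sum_insert hbnot,
    Finset.sum_erase_eq_sub h2, Finset.sum_erase_eq_sub hi]
  push_cast
  ring

lemma centroid_eq_of (hc : T.card = S.card)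
    (hs : ∑ x ∈ T, (x : ℚ) = ∑ x ∈ S, (x : ℚ)) : centroidF T = centroidF S := by
  unfold centroidF; rw [hc, hs]

end Aux
section Aux2
open Relation

lemma exists_nearest_right (S : Finset ℤ) (c : ℤ) :
    ∃ d : ℤ, 1 ≤ d ∧ c + d ∉ S ∧ ∀ j : ℤ, 1 ≤ j → j < d → c + j ∈ S := by
  classical
  have hex : ∃ n : ℕ, c + ((n : ℤ) + 1) ∉ S := by
    by_cases hS : S.Nonempty
    · refine ⟨(S.max' hS - c).toNat, fun hmem => ?_⟩
      have := S.le_max' _ hmem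
      omega
    · exact ⟨0, fun hmem => hS ⟨_, hmem⟩⟩
  refine ⟨(Nat.find hex : ℤ) + 1, by omega, Nat.find_spec hex, ?_⟩
  intro j hj1 hj2
  have hmin := Nat.find_min hex (m := (j - 1).toNat) (by omega)
  push_neg at hmin
  have : ((j - 1).toNat : ℤ) = j - 1 := by omega
  rw [this] at hmin
  simpa using hmin

lemma exists_nearest_left (S : Finset ℤ) (c : ℤ) :
    ∃ d : ℤ, 1 ≤ d ∧ c - d ∉ S ∧ ∀ j : ℤ, 1 ≤ j → j < d → c - j ∈ S := by
  classical
  have hex : ∃ n : ℕ, c - ((n : ℤ) + 1) ∉ S := by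
    by_cases hS : S.Nonempty
    · refine ⟨(c - S.min' hS).toNat, fun hmem => ?_⟩
      have := S.min'_le _ hmem
      omega
    · exact ⟨0, fun hmem => hS ⟨_, hmem⟩⟩
  refine ⟨(Nat.find hex : ℤ) + 1, by omega, Nat.find_spec hex, ?_⟩
  intro j hj1 hj2
  have hmin := Nat.find_min hex (m := (j - 1).toNat) (by omega)
  push_neg at hmin
  have : ((j - 1).toNat : ℤ) = j - 1 := by omega
  rw [this] at hmin
  simpa using hmin

lemma not_locked_of_unbalanced {S : Finset ℤ} {i ℓ r : ℤ}
    (hℓ1 : 1 ≤ ℓ) (hr1 : 1 ≤ r) (hi : i ∈ S) (hi1 : i + 1 ∈ S)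
    (hL : ∀ j : ℤ, 1 ≤ j → j < ℓ → i - j ∈ S) (hLe : i - ℓ ∉ S)
    (hR : ∀ j : ℤ, 2 ≤ j → j ≤ r → i + j ∈ S) (hRe : i + 1 + r ∉ S)
    (hne : ℓ ≠ r) : ¬ LockedIn S := by
  intro hLock
  set T := insert (i - ℓ) (insert (i + 1 + r) ((S.erase i).erase (i + 1))) with hT
  have hmove : FMove S T := ⟨i, ℓ, r, hℓ1, hr1, hi, hi1, hL, hLe, hR, hRe, rfl⟩
  have hcentro := hLock T (ReflTransGen.single hmove)
  have hab : i - ℓ ≠ i + 1 + r := by omega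
  have hcard := move_card hi hi1 hLe hRe hab
  have hsum := move_sum hi hi1 hLe hRe hab
  unfold centroidF at hcentro
  rw [hcard, hsum] at hcentro
  have hc0 : (S.card : ℚ) ≠ 0 := by
    have : 0 < S.card := Finset.card_pos.mpr ⟨i, hi⟩
    exact_mod_cast this.ne'
  rw [div_eq_div_iff hc0 hc0] at hcentro
  have h2 := mul_right_cancel₀ hc0 hcentro
  push_cast at h2
  have : (r : ℚ) = (ℓ : ℚ) := by linarith
  exact hne (by exact_mod_cast this.symm)

lemma not_locked_of_triple {S : Finset ℤ} {i : ℤ} (h0 : i ∈ S) (h1 : i + 1 ∈ S)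
    (h2 : i + 2 ∈ S) : ¬ LockedIn S := by
  obtain ⟨ℓ, hℓ1, hℓ2, hℓ3⟩ := exists_nearest_left S i
  obtain ⟨r, hr1, hr2, hr3⟩ := exists_nearest_right S (i + 2)
  by_cases hδ : ℓ = r + 1
  · -- move from (i+1, i+2) with (ℓ+1, r) : unbalanced since ℓ+1 = r+2 ≠ r
    refine not_locked_of_unbalanced (i := i + 1) (ℓ := ℓ + 1) (r := r) (by omega) hr1
      (by exact h1) (by exact mS h2 (by ring)) ?_ ?_ ?_ ?_ (by omega)
    · intro j hj1 hj2
      rcases eq_or_lt_of_le hj1 with he | hgt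
      · exact mS h0 (by omega)
      · exact mS (hℓ3 (j-1) (by omega) (by omega)) (by ring)
    · exact mNS hℓ2 (by ring)
    · intro j hj1 hj2
      exact mS (hr3 (j-1) (by omega) (by omega)) (by ring)
    · exact mNS hr2 (by ring)
  · -- move from (i, i+1) with (ℓ, r+1)
    refine not_locked_of_unbalanced (i := i) (ℓ := ℓ) (r := r + 1) hℓ1 (by omega)
      h0 h1 hℓ3 hℓ2 ?_ ?_ (by omega)
    · intro j hj1 hj2
      rcases eq_or_lt_of_le hj1 with he | hgt
      · exact mS h2 (by omega)
      · exact mS (hr3 (j-2) (by omega) (by omega)) (by ring)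
    · exact mNS hr2 (by ring)

lemma not_locked_of_move {S T : Finset ℤ} (h : FMove S T)
    (hc : centroidF T = centroidF S) (hT : ¬ LockedIn T) : ¬ LockedIn S := by
  intro hS
  apply hT
  intro U hU
  rw [hS U (ReflTransGen.head h hU), hc]

end Aux2
section Aux3
open Relation

lemma mF {A : Finset ℤ} {x y : ℤ} (h : x ∈ A) (e : x = y) : y ∈ A := e ▸ h

/-- No three consecutive empty rooms strictly inside the occupied hull. -/
def NoTriGap (S : Finset ℤ) : Prop :=
  ∀ m : ℤ, m ∉ S → m + 1 ∉ S → m + 2 ∉ S →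
    ¬((∃ x ∈ S, x < m) ∧ ∃ y ∈ S, m + 2 < y)

lemma noTriGap_Icc (lo hi : ℤ) : NoTriGap (Finset.Icc lo hi) := by
  intro m hm hm1 hm2 ⟨⟨x, hx, hxm⟩, ⟨y, hy, hym⟩⟩
  simp only [Finset.mem_Icc] at *
  omega

lemma noTriGap_move {S T : Finset ℤ} (hG : NoTriGap S) (h : FMove S T) : NoTriGap T := by
  obtain ⟨i, ℓ, r, hℓ1, hr1, hi, hi1, hL, hLe, hR, hRe, rfl⟩ := h
  intro m hm hm1 hm2 ⟨⟨x, hx, hxm⟩, ⟨y, hy, hym⟩⟩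
  have him1 : i - 1 ∈ insert (i - ℓ) (insert (i + 1 + r) ((S.erase i).erase (i + 1))) := by
    rcases eq_or_lt_of_le hℓ1 with he | hgt
    · rw [memT]; left; omega
    · exact inT (hL 1 le_rfl (by omega)) (by omega) (by omega)
  have hi2 : i + 2 ∈ insert (i - ℓ) (insert (i + 1 + r) ((S.erase i).erase (i + 1))) := by
    rcases eq_or_lt_of_le hr1 with he | hgt
    · rw [memT]; right; left; omega
    · exact inT (hR 2 le_rfl (by omega)) (by omega) (by omega)
  have h6 : m ≠ i ∧ m ≠ i + 1 ∧ m + 1 ≠ i ∧ m + 1 ≠ i + 1 ∧ m + 2 ≠ i ∧ m + 2 ≠ i + 1 := by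
    refine ⟨fun he => hm2 (mF hi2 (by omega)), fun he => hm1 (mF hi2 (by omega)),
      fun he => hm (mF him1 (by omega)), fun he => hm2 (mF hi2 (by omega)),
      fun he => hm1 (mF him1 (by omega)), fun he => hm (mF him1 (by omega))⟩
  have hmS : m ∉ S := fun hmem => hm (inT hmem h6.1 h6.2.1)
  have hm1S : m + 1 ∉ S := fun hmem => hm1 (inT hmem h6.2.2.1 h6.2.2.2.1)
  have hm2S : m + 2 ∉ S := fun hmem => hm2 (inT hmem h6.2.2.2.2.1 h6.2.2.2.2.2)
  have hx' : ∃ x ∈ S, x < m := by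
    rw [memT] at hx
    rcases hx with rfl | rfl | ⟨hxS, _, _⟩
    · -- x = i - ℓ < m : then m > i + 1
      have : i + 1 < m := by
        by_contra hc
        push_neg at hc
        have hk : 1 ≤ i - m ∧ i - m < ℓ := by omega
        exact hmS (mS (hL (i - m) hk.1 hk.2) (by ring))
      exact ⟨i + 1, hi1, this⟩
    · exact ⟨i + 1, hi1, by omega⟩
    · exact ⟨x, hxS, hxm⟩
  have hy' : ∃ y ∈ S, m + 2 < y := by
    rw [memT] at hy
    rcases hy with rfl | rfl | ⟨hyS, _, _⟩
    · exact ⟨i, hi, by omega⟩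
    · by_cases hc : m + 2 ≤ i - 1
      · exact ⟨i, hi, by omega⟩
      · push_neg at hc
        have hk : 2 ≤ m + 2 - i ∧ m + 2 - i ≤ r := by omega
        exact absurd (mS (hR (m + 2 - i) hk.1 hk.2) (by ring)) hm2S
    · exact ⟨y, hyS, hym⟩
  exact hG m hmS hm1S hm2S ⟨hx', hy'⟩

lemma noTriGap_reach {A S : Finset ℤ} (hA : NoTriGap A) (h : FReaches A S) : NoTriGap S := by
  induction h with
  | refl => exact hA
  | tail _ h2 ih => exact noTriGap_move ih h2

end Aux3
section Aux4
open Relation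

lemma spacious_move {S T : Finset ℤ} (hS : Spacious S) (h : FMove S T) :
    Spacious T ∧ T.card = S.card ∧ ∑ x ∈ T, (x : ℚ) = ∑ x ∈ S, (x : ℚ) := by
  obtain ⟨i, ℓ, r, hℓ1, hr1, hi, hi1, hL, hLe, hR, hRe, rfl⟩ := h
  obtain ⟨hnt, hgap⟩ := hS
  have hi2 : i + 2 ∉ S := fun h2 => hnt i ⟨hi, hi1, h2⟩
  have him1 : i - 1 ∉ S := fun h2 => hnt (i - 1) ⟨h2, mS hi (by ring), mS hi1 (by ring)⟩
  have hℓ : ℓ = 1 := by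
    by_contra hne; exact him1 (hL 1 le_rfl (by omega))
  have hr : r = 1 := by
    by_contra hne; exact hi2 (hR 2 le_rfl (by omega))
  subst hℓ hr
  have hb2 : i + 1 + 1 ∉ S := mNS hi2 (by ring)
  have hrun2i : Run2 S i := ⟨hi, hi1, him1, hi2⟩
  have hTi : i ∉ insert (i - 1) (insert (i + 1 + 1) ((S.erase i).erase (i + 1))) :=
    fun hmem => by rcases memT.mp hmem with h | h | ⟨_, h, -⟩ <;> omega
  have hTi1 : i + 1 ∉ insert (i - 1) (insert (i + 1 + 1) ((S.erase i).erase (i + 1))) :=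
    fun hmem => by rcases memT.mp hmem with h | h | ⟨_, -, h⟩ <;> omega
  have hTm1 : i - 1 ∈ insert (i - 1) (insert (i + 1 + 1) ((S.erase i).erase (i + 1))) := by
    rw [memT]; left; rfl
  have hT2 : i + 2 ∈ insert (i - 1) (insert (i + 1 + 1) ((S.erase i).erase (i + 1))) := by
    rw [memT]; right; left; omega
  have toS : ∀ x : ℤ, x ∈ insert (i - 1) (insert (i + 1 + 1) ((S.erase i).erase (i + 1))) →
      x ≠ i - 1 → x ≠ i + 2 → x ∈ S := by
    intro x hx h1 h2
    rcases memT.mp hx with h | h | ⟨h, -, -⟩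
    · omega
    · omega
    · exact h
  refine ⟨⟨?_, ?_⟩, move_card hi hi1 him1 hb2 (by omega), ?_⟩
  · -- no triple in T
    intro a ⟨ha0, ha1, ha2⟩
    by_cases hc1 : a ≤ i - 4
    · exact hnt a ⟨toS _ ha0 (by omega) (by omega), toS _ ha1 (by omega) (by omega),
        toS _ ha2 (by omega) (by omega)⟩
    by_cases hc2 : a = i - 3
    · -- triple i-3, i-2, i-1 in T: contradiction with spaciousness of S
      have h3 : i - 3 ∈ S := mS (toS _ ha0 (by omega) (by omega)) (by omega)
      have h4 : i - 2 ∈ S := mS (toS _ ha1 (by omega) (by omega)) (by omega)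
      have h5 : i - 4 ∉ S := fun hmem =>
        hnt (i - 4) ⟨hmem, mS h3 (by ring), mS h4 (by ring)⟩
      have hrun : Run2 S (i - 3) :=
        ⟨h3, mS h4 (by ring), mNS h5 (by ring), mNS him1 (by ring)⟩
      obtain ⟨m, hm1, hm2, -⟩ := hgap (i - 3) i hrun hrun2i (by omega)
      omega
    by_cases hc3 : a = i - 2
    · exact hTi (mF ha2 (by omega))
    by_cases hc4 : a = i - 1
    · exact hTi (mF ha1 (by omega))
    by_cases hc5 : a = i
    · exact hTi (mF ha0 (by omega))
    by_cases hc6 : a = i + 1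
    · exact hTi1 (mF ha0 (by omega))
    by_cases hc7 : a = i + 2
    · have h3 : i + 3 ∈ S := mS (toS _ ha1 (by omega) (by omega)) (by omega)
      have h4 : i + 4 ∈ S := mS (toS _ ha2 (by omega) (by omega)) (by omega)
      have h5 : i + 5 ∉ S := fun hmem =>
        hnt (i + 3) ⟨h3, mS h4 (by ring), mS hmem (by ring)⟩
      have hrun : Run2 S (i + 3) :=
        ⟨h3, mS h4 (by ring), mNS hi2 (by ring), mNS h5 (by ring)⟩
      obtain ⟨m, hm1, hm2, -⟩ := hgap i (i + 3) hrun2i hrun (by omega)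
      omega
    · have hc8 : i + 3 ≤ a := by omega
      exact hnt a ⟨toS _ ha0 (by omega) (by omega), toS _ ha1 (by omega) (by omega),
        toS _ ha2 (by omega) (by omega)⟩
  · -- Run2 separation in T
    have classify : ∀ c : ℤ,
        Run2 (insert (i - 1) (insert (i + 1 + 1) ((S.erase i).erase (i + 1)))) c →
        (c ≤ i - 4 ∧ Run2 S c) ∨ (c = i - 2 ∧ i - 2 ∈ S ∧ i - 3 ∉ S) ∨
        (c = i + 2 ∧ i + 3 ∈ S ∧ i + 4 ∉ S) ∨ (i + 4 ≤ c ∧ Run2 S c) := by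
      intro c hc
      obtain ⟨c0, c1, c2, c3⟩ := hc
      by_cases h1 : c ≤ i - 4
      · refine Or.inl ⟨h1, toS _ c0 (by omega) (by omega), toS _ c1 (by omega) (by omega),
          fun hmem => c2 (inT hmem (by omega) (by omega)),
          fun hmem => c3 (inT hmem (by omega) (by omega))⟩
      by_cases h2 : c = i - 3
      · exact absurd (mF hTm1 (by omega)) c3
      by_cases h3 : c = i - 2
      · exact Or.inr (Or.inl ⟨h3, mS (toS _ c0 (by omega) (by omega)) (by omega),
          fun hmem => c2 (mF (inT hmem (by omega) (by omega)) (by omega))⟩)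
      by_cases h4 : c = i - 1
      · exact absurd (mF c1 (by omega)) hTi
      by_cases h5 : c = i
      · exact absurd (mF c0 h5) hTi
      by_cases h6 : c = i + 1
      · exact absurd (mF c0 h6) hTi1
      by_cases h7 : c = i + 2
      · exact Or.inr (Or.inr (Or.inl ⟨h7, mS (toS _ c1 (by omega) (by omega)) (by omega),
          fun hmem => c3 (mF (inT hmem (by omega) (by omega)) (by omega))⟩))
      by_cases h8 : c = i + 3
      · exact absurd (mF hT2 (by omega)) c2
      · have h9 : i + 4 ≤ c := by omega
        refine Or.inr (Or.inr (Or.inr ⟨h9, toS _ c0 (by omega) (by omega),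
          toS _ c1 (by omega) (by omega),
          fun hmem => c2 (inT hmem (by omega) (by omega)),
          fun hmem => c3 (inT hmem (by omega) (by omega))⟩))
    intro a b hra hrb hab
    rcases classify a hra with ⟨haa, hrsa⟩ | ⟨haa, haa1, haa2⟩ | ⟨haa, haa1, haa2⟩ | ⟨haa, hrsa⟩ <;>
      rcases classify b hrb with ⟨hbb, hrsb⟩ | ⟨hbb, hbb1, hbb2⟩ | ⟨hbb, hbb1, hbb2⟩ | ⟨hbb, hrsb⟩
    · -- both left old
      obtain ⟨m, hm1, hm2, hm3, hm4, hm5, hm6⟩ := hgap a b hrsa hrsb hab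
      exact ⟨m, hm1, hm2, notT (by omega) (by omega) hm3, notT (by omega) (by omega) hm4,
        inT hm5 (by omega) (by omega), inT hm6 (by omega) (by omega)⟩
    · -- a left old, b = i - 2
      obtain ⟨m, hm1, hm2, hm3, hm4, hm5, hm6⟩ := hgap a i hrsa hrun2i (by omega)
      have hne1 : m + 2 ≠ i := fun he => hm3 (mS hbb1 (by omega))
      have hne2 : m + 2 ≠ i - 1 := fun he => him1 (mS hm6 he)
      have hub : m + 2 ≤ i - 2 := by omega
      exact ⟨m, hm1, by omega, notT (by omega) (by omega) hm3,
        notT (by omega) (by omega) hm4, inT hm5 (by omega) (by omega),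
        inT hm6 (by omega) (by omega)⟩
    · -- a left, b = i + 2 : middle gap
      exact ⟨i, by omega, by omega, hTi, hTi1, hTm1, hT2⟩
    · exact ⟨i, by omega, by omega, hTi, hTi1, hTm1, hT2⟩
    · omega
    · omega
    · exact ⟨i, by omega, by omega, hTi, hTi1, hTm1, hT2⟩
    · exact ⟨i, by omega, by omega, hTi, hTi1, hTm1, hT2⟩
    · omega
    · omega
    · omega
    · -- a = i + 2, b right old
      obtain ⟨m, hm1, hm2, hm3, hm4, hm5, hm6⟩ := hgap i b hrun2i hrsb (by omega)
      have hne1 : m ≠ i + 2 := fun he => hm4 (mS haa1 (by omega))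
      have hne2 : m ≠ i + 3 := fun he => hm3 (mS haa1 (by omega))
      have hlb : i + 4 ≤ m := by omega
      exact ⟨m, by omega, hm2, notT (by omega) (by omega) hm3,
        notT (by omega) (by omega) hm4, inT hm5 (by omega) (by omega),
        inT hm6 (by omega) (by omega)⟩
    · omega
    · omega
    · omega
    · -- both right old
      obtain ⟨m, hm1, hm2, hm3, hm4, hm5, hm6⟩ := hgap a b hrsa hrsb hab
      exact ⟨m, hm1, hm2, notT (by omega) (by omega) hm3, notT (by omega) (by omega) hm4,
        inT hm5 (by omega) (by omega), inT hm6 (by omega) (by omega)⟩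
  · rw [move_sum hi hi1 him1 hb2 (by omega)]
    push_cast
    ring
end Aux4
section Aux5
open Relation

lemma reach_spacious {S T : Finset ℤ} (hS : Spacious S) (h : FReaches S T) :
    Spacious T ∧ centroidF T = centroidF S := by
  induction h with
  | refl => exact ⟨hS, rfl⟩
  | tail h1 h2 ih =>
    obtain ⟨hsp, hc⟩ := ih
    obtain ⟨hsp', hcard, hsum⟩ := spacious_move hsp h2
    exact ⟨hsp', by rw [centroid_eq_of hcard hsum, hc]⟩

lemma locked_of_spacious {S : Finset ℤ} (hS : Spacious S) : LockedIn S :=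
  fun T h => (reach_spacious hS h).2

lemma not_locked_aux : ∀ n : ℕ, ∀ S : Finset ℤ, ∀ i j : ℤ, NoTriGap S →
    Run2 S i → Run2 S j → i < j → (j - i).toNat ≤ n →
    (∀ m : ℤ, i + 1 < m → m + 1 < j → m ∈ S ∨ m + 1 ∈ S) → ¬ LockedIn S := by
  intro n
  induction n with
  | zero => intro S i j _ _ _ hij hn _; omega
  | succ n ih =>
    intro S i j hG hri hrj hij hn hbet
    obtain ⟨hi, hi1, him1, hi2⟩ := hri
    obtain ⟨hj, hj1, hjm1, hj2⟩ := hrj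
    have hjne1 : j ≠ i + 1 := fun he => hjm1 (mS hi (by omega))
    have hjne2 : j ≠ i + 2 := fun he => hi2 (mS hj he)
    have hj3 : i + 3 ≤ j := by omega
    have hb2 : i + 1 + 1 ∉ S := mNS hi2 (by ring)
    have hmove : FMove S
        (insert (i - 1) (insert (i + 1 + 1) ((S.erase i).erase (i + 1)))) :=
      ⟨i, 1, 1, le_rfl, le_rfl, hi, hi1,
        fun j h1 h2 => absurd h1 (by omega), him1,
        fun j h1 h2 => absurd h1 (by omega), hb2, rfl⟩
    have hcent : centroidF (insert (i - 1) (insert (i + 1 + 1) ((S.erase i).erase (i + 1))))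
        = centroidF S := by
      apply centroid_eq_of (move_card hi hi1 him1 hb2 (by omega))
      rw [move_sum hi hi1 him1 hb2 (by omega)]; push_cast; ring
    apply not_locked_of_move hmove hcent
    have hT2 : i + 2 ∈ insert (i - 1) (insert (i + 1 + 1) ((S.erase i).erase (i + 1))) := by
      rw [memT]; right; left; omega
    have hTi1 : i + 1 ∉ insert (i - 1) (insert (i + 1 + 1) ((S.erase i).erase (i + 1))) :=
      fun hmem => by rcases memT.mp hmem with h | h | ⟨-, -, h⟩ <;> omega
    by_cases hc : j = i + 3
    · -- the move creates the triple i+2, i+3, i+4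
      refine not_locked_of_triple (i := i + 2) hT2 ?_ ?_
      · exact mF (inT (mS hj hc) (by omega) (by omega)) (by omega)
      · exact mF (inT (mS hj1 (show j + 1 = i + 4 by omega)) (by omega) (by omega)) (by omega)
    · have hj4 : i + 4 ≤ j := by omega
      have h3 : i + 3 ∈ S := by
        rcases hbet (i + 2) (by omega) (by omega) with h | h
        · exact absurd h hi2
        · exact mS h (by ring)
      by_cases hc4 : i + 4 ∈ S
      · -- the move creates the triple i+2, i+3, i+4
        exact not_locked_of_triple (i := i + 2) hT2
          (mF (inT h3 (by omega) (by omega)) (by omega))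
          (mF (inT hc4 (by omega) (by omega)) (by omega))
      · -- recurse with the runs at i+2 and j
        refine ih _ (i + 2) j (noTriGap_move hG hmove) ?_ ?_ (by omega) (by omega) ?_
        · refine ⟨hT2, mF (inT h3 (by omega) (by omega)) (by omega), ?_, ?_⟩
          · exact fun hmem => hTi1 (mF hmem (by omega))
          · exact fun hmem => (notT (by omega) (by omega) hc4) (mF hmem (by omega))
        · refine ⟨inT hj (by omega) (by omega), inT hj1 (by omega) (by omega), ?_, ?_⟩
          · intro hmem
            rcases memT.mp hmem with h | h | ⟨h, -, -⟩
            · omega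
            · omega
            · exact hjm1 h
          · intro hmem
            rcases memT.mp hmem with h | h | ⟨h, -, -⟩
            · omega
            · omega
            · exact hj2 h
        · intro m hm1 hm2
          rcases hbet m (by omega) hm2 with h | h
          · exact Or.inl (inT h (by omega) (by omega))
          · exact Or.inr (inT h (by omega) (by omega))

end Aux5
/-- An intermediate state reachable from a clusteron is locked-in iff it is spacious. -/
theorem lockedIn_iff_spacious (lo hi : ℤ) (hlohi : lo ≤ hi) (S : Finset ℤ)
    (h : FReaches (Finset.Icc lo hi) S) :
    LockedIn S ↔ Spacious S := by
  constructor
  · intro hL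
    have hG : NoTriGap S := noTriGap_reach (noTriGap_Icc lo hi) h
    constructor
    · intro a ⟨h0, h1, h2⟩
      exact not_locked_of_triple h0 h1 h2 hL
    · intro a b hra hrb hab
      by_contra hno
      push_neg at hno
      have hbet : ∀ m : ℤ, a + 1 < m → m + 1 < b → m ∈ S ∨ m + 1 ∈ S := by
        intro m h1 h2
        by_contra hcon
        push_neg at hcon
        obtain ⟨hm, hm1⟩ := hcon
        have hm2 : m - 1 ∈ S := by
          by_contra hm2
          rcases eq_or_lt_of_le (by omega : a + 1 ≤ m - 1) with he | hlt
          · exact hm2 (mS hra.2.1 he)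
          · exact hG (m - 1) hm2 (mNS hm (by ring)) (mNS hm1 (by ring))
              ⟨⟨a + 1, hra.2.1, hlt⟩, ⟨b, hrb.1, by omega⟩⟩
        have hm3 : m + 2 ∈ S := by
          by_contra hm3
          rcases eq_or_lt_of_le (by omega : m + 2 ≤ b) with he | hlt
          · exact hm3 (mS hrb.1 he.symm)
          · exact hG m hm hm1 hm3 ⟨⟨a + 1, hra.2.1, by omega⟩, ⟨b, hrb.1, hlt⟩⟩
        exact hno m h1 h2 hm hm1 hm2 hm3
      exact not_locked_aux ((b - a).toNat) S a b hG hra hrb hab le_rfl hbet hL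
  · exact fun hsp => locked_of_spacious hsp
end

section
/- Spaciousness is preserved under moves: if a state is spacious (no clusteron of size > 2, and any two 2-clusterons are separated by at least one 2-gap) and a move is performed, the resulting state is again spacious. -/
/-- Spaciousness is preserved under moves. -/
theorem spacious_preserved (S T : Finset ℤ) (hS : Spacious S) (h : FMove S T) :
    Spacious T := by
  obtain ⟨i, l, r, hl, hr, hi, hi1, hLl, hLout, hRr, hRout, hT⟩ := h
  obtain ⟨h1, h2⟩ := hS
  -- neighbors of the run are empty
  have him1 : i - 1 ∉ S := fun hc =>
    h1 (i - 1) ⟨hc, by rwa [show i - 1 + 1 = i by ring], by rwa [show i - 1 + 2 = i + 1 by ring]⟩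
  have hip2 : i + 2 ∉ S := fun hc => h1 i ⟨hi, hi1, hc⟩
  -- the move parameters are forced to be 1
  have hl1 : l = 1 := by
    by_contra hc
    exact him1 (hLl 1 le_rfl (by omega))
  have hr1 : r = 1 := by
    by_contra hc
    exact hip2 (hRr 2 le_rfl (by omega))
  subst hl1 hr1
  -- membership in T
  have memT : ∀ z : ℤ, z ∈ T ↔ z = i - 1 ∨ z = i + 2 ∨ (z ∈ S ∧ z ≠ i ∧ z ≠ i + 1) := by
    intro z
    subst hT
    simp only [Finset.mem_insert, Finset.mem_erase]
    constructor
    · rintro (h | h | ⟨h3, h4, h5⟩)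
      · exact Or.inl h
      · exact Or.inr (Or.inl (by omega))
      · exact Or.inr (Or.inr ⟨h5, h4, h3⟩)
    · rintro (h | h | ⟨h3, h4, h5⟩)
      · exact Or.inl h
      · exact Or.inr (Or.inl (by omega))
      · exact Or.inr (Or.inr ⟨h5, h4, h3⟩)
  have hiT : i ∉ T := by
    rw [memT]
    rintro (h | h | ⟨_, h, _⟩) <;> omega
  have hi1T : i + 1 ∉ T := by
    rw [memT]
    rintro (h | h | ⟨_, _, h⟩) <;> omega
  have him1T : i - 1 ∈ T := (memT _).mpr (Or.inl rfl)
  have hip2T : i + 2 ∈ T := (memT _).mpr (Or.inr (Or.inl rfl))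
  -- membership transfer away from the move site
  have trans : ∀ z : ℤ, z ≤ i - 2 ∨ i + 3 ≤ z → (z ∈ T ↔ z ∈ S) := by
    intro z hz
    rw [memT]
    constructor
    · rintro (h | h | ⟨h, _, _⟩)
      · omega
      · omega
      · exact h
    · intro h
      exact Or.inr (Or.inr ⟨h, by omega, by omega⟩)
  -- key exclusion facts from spaciousness of S
  have hL2 : ¬(i - 3 ∈ S ∧ i - 2 ∈ S) := by
    rintro ⟨ha, hb⟩
    have h4 : i - 4 ∉ S := fun hc =>
      h1 (i - 4) ⟨hc, by rwa [show i - 4 + 1 = i - 3 by ring],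
        by rwa [show i - 4 + 2 = i - 2 by ring]⟩
    have hrun : Run2 S (i - 3) :=
      ⟨ha, by rwa [show i - 3 + 1 = i - 2 by ring],
        by rw [show i - 3 - 1 = i - 4 by ring]; exact h4,
        by rw [show i - 3 + 2 = i - 1 by ring]; exact him1⟩
    obtain ⟨m, hm1, hm2, _⟩ := h2 (i - 3) i hrun ⟨hi, hi1, him1, hip2⟩ (by omega)
    omega
  have hR2 : ¬(i + 3 ∈ S ∧ i + 4 ∈ S) := by
    rintro ⟨ha, hb⟩
    have h5 : i + 5 ∉ S := fun hc =>
      h1 (i + 3) ⟨ha, by rwa [show i + 3 + 1 = i + 4 by ring],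
        by rwa [show i + 3 + 2 = i + 5 by ring]⟩
    have hrun : Run2 S (i + 3) :=
      ⟨ha, by rwa [show i + 3 + 1 = i + 4 by ring],
        by rw [show i + 3 - 1 = i + 2 by ring]; exact hip2,
        by rw [show i + 3 + 2 = i + 5 by ring]; exact h5⟩
    obtain ⟨m, hm1, hm2, _⟩ := h2 i (i + 3) ⟨hi, hi1, him1, hip2⟩ hrun (by omega)
    omega
  have hRun2Si : Run2 S i := ⟨hi, hi1, him1, hip2⟩
  constructor
  · -- no three consecutive occupied rooms in T
    rintro a ⟨ha, ha1, ha2⟩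
    have hna : a ≠ i ∧ a ≠ i + 1 := ⟨fun h => hiT (h ▸ ha), fun h => hi1T (h ▸ ha)⟩
    have hna1 : a + 1 ≠ i ∧ a + 1 ≠ i + 1 := ⟨fun h => hiT (h ▸ ha1), fun h => hi1T (h ▸ ha1)⟩
    have hna2 : a + 2 ≠ i ∧ a + 2 ≠ i + 1 := ⟨fun h => hiT (h ▸ ha2), fun h => hi1T (h ▸ ha2)⟩
    have hcase : a ≤ i - 3 ∨ i + 2 ≤ a := by omega
    rcases hcase with hc | hc
    · rcases eq_or_lt_of_le hc with he | he
      · -- a = i - 3 : then i-3, i-2 ∈ S, contradiction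
        have h3 : a ∈ S := (trans a (by omega)).mp ha
        have h4 : a + 1 ∈ S := (trans (a + 1) (by omega)).mp ha1
        exact hL2 ⟨by rwa [he] at h3, by rwa [show a + 1 = i - 2 by omega] at h4⟩
      · -- a ≤ i - 4 : triple in S
        exact h1 a ⟨(trans a (by omega)).mp ha, (trans (a + 1) (by omega)).mp ha1,
          (trans (a + 2) (by omega)).mp ha2⟩
    · rcases eq_or_lt_of_le hc with he | he
      · -- a = i + 2 : then i+3, i+4 ∈ S, contradiction
        have h3 : a + 1 ∈ S := (trans (a + 1) (by omega)).mp ha1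
        have h4 : a + 2 ∈ S := (trans (a + 2) (by omega)).mp ha2
        exact hR2 ⟨by rwa [show a + 1 = i + 3 by omega] at h3,
          by rwa [show a + 2 = i + 4 by omega] at h4⟩
      · -- a ≥ i + 3 : triple in S
        exact h1 a ⟨(trans a (by omega)).mp ha, (trans (a + 1) (by omega)).mp ha1,
          (trans (a + 2) (by omega)).mp ha2⟩
  · -- separation of 2-runs in T
    have classify : ∀ a : ℤ, Run2 T a →
        (a = i - 2 ∧ i - 2 ∈ S) ∨ (a = i + 2 ∧ i + 3 ∈ S) ∨
        (a ≤ i - 4 ∧ Run2 S a) ∨ (i + 4 ≤ a ∧ Run2 S a) := by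
      rintro a ⟨ha, ha1, ham, hap⟩
      have hna : a ≠ i := fun h => hiT (h ▸ ha)
      have hna' : a ≠ i + 1 := fun h => hi1T (h ▸ ha)
      have hna1 : a + 1 ≠ i := fun h => hiT (h ▸ ha1)
      have hna1' : a + 1 ≠ i + 1 := fun h => hi1T (h ▸ ha1)
      rcases show a = i - 2 ∨ a = i - 3 ∨ a ≤ i - 4 ∨ a = i + 2 ∨ a = i + 3 ∨ i + 4 ≤ a
        by omega with h | h | h | h | h | h
      · left
        refine ⟨h, ?_⟩
        have h3 := (trans a (by omega)).mp ha
        rwa [h] at h3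
      · exfalso
        have h3 := (trans a (by omega)).mp ha
        have h4 := (trans (a + 1) (by omega)).mp ha1
        rw [h] at h3
        rw [show a + 1 = i - 2 by omega] at h4
        exact hL2 ⟨h3, h4⟩
      · refine Or.inr (Or.inr (Or.inl ⟨h, (trans a (by omega)).mp ha,
          (trans (a + 1) (by omega)).mp ha1,
          fun hc => ham ((trans (a - 1) (by omega)).mpr hc),
          fun hc => hap ((trans (a + 2) (by omega)).mpr hc)⟩))
      · right; left
        refine ⟨h, ?_⟩
        have h4 := (trans (a + 1) (by omega)).mp ha1
        rwa [show a + 1 = i + 3 by omega] at h4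
      · exfalso
        have h3 := (trans a (by omega)).mp ha
        have h4 := (trans (a + 1) (by omega)).mp ha1
        rw [h] at h3
        rw [show a + 1 = i + 4 by omega] at h4
        exact hR2 ⟨h3, h4⟩
      · refine Or.inr (Or.inr (Or.inr ⟨h, (trans a (by omega)).mp ha,
          (trans (a + 1) (by omega)).mp ha1,
          fun hc => ham ((trans (a - 1) (by omega)).mpr hc),
          fun hc => hap ((trans (a + 2) (by omega)).mpr hc)⟩))
    intro x y hx hy hxy
    rcases classify x hx with ⟨hxe, hxS⟩ | ⟨hxe, hxS⟩ | ⟨hxe, hxS⟩ | ⟨hxe, hxS⟩ <;>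
      rcases classify y hy with ⟨hye, hyS⟩ | ⟨hye, hyS⟩ | ⟨hye, hyS⟩ | ⟨hye, hyS⟩
    -- x = i - 2
    · omega
    · exact ⟨i, by omega, by omega, hiT, hi1T, him1T, hip2T⟩
    · omega
    · exact ⟨i, by omega, by omega, hiT, hi1T, him1T, hip2T⟩
    -- x = i + 2
    · omega
    · omega
    · omega
    · -- x = i + 2, y ≥ i + 4
      obtain ⟨m, hm1, hm2, hm3, hm4, hm5, hm6⟩ := h2 i y hRun2Si hyS (by omega)
      have hmne2 : m ≠ i + 2 := by
        intro h
        apply hm4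
        rw [h, show i + 2 + 1 = i + 3 by ring]
        exact hxS
      have hmne3 : m ≠ i + 3 := by
        intro h
        apply hm3
        rw [h]
        exact hxS
      have hm' : i + 4 ≤ m := by omega
      exact ⟨m, by omega, hm2, fun hc => hm3 ((trans m (by omega)).mp hc),
        fun hc => hm4 ((trans (m + 1) (by omega)).mp hc),
        (trans (m - 1) (by omega)).mpr hm5, (trans (m + 2) (by omega)).mpr hm6⟩
    -- x ≤ i - 4
    · -- y = i - 2
      obtain ⟨m, hm1, hm2, hm3, hm4, hm5, hm6⟩ := h2 x i hxS hRun2Si (by omega)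
      have hmne2 : m ≠ i - 2 := by
        intro h
        apply hm3
        rw [h]
        exact hyS
      have hmne3 : m ≠ i - 3 := by
        intro h
        apply hm4
        rw [h, show i - 3 + 1 = i - 2 by ring]
        exact hyS
      have hm' : m ≤ i - 4 := by omega
      exact ⟨m, hm1, by omega, fun hc => hm3 ((trans m (by omega)).mp hc),
        fun hc => hm4 ((trans (m + 1) (by omega)).mp hc),
        (trans (m - 1) (by omega)).mpr hm5, (trans (m + 2) (by omega)).mpr hm6⟩
    · exact ⟨i, by omega, by omega, hiT, hi1T, him1T, hip2T⟩
    · -- both ≤ i - 4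
      obtain ⟨m, hm1, hm2, hm3, hm4, hm5, hm6⟩ := h2 x y hxS hyS hxy
      exact ⟨m, hm1, hm2, fun hc => hm3 ((trans m (by omega)).mp hc),
        fun hc => hm4 ((trans (m + 1) (by omega)).mp hc),
        (trans (m - 1) (by omega)).mpr hm5, (trans (m + 2) (by omega)).mpr hm6⟩
    · exact ⟨i, by omega, by omega, hiT, hi1T, him1T, hip2T⟩
    -- x ≥ i + 4
    · omega
    · omega
    · omega
    · -- both ≥ i + 4
      obtain ⟨m, hm1, hm2, hm3, hm4, hm5, hm6⟩ := h2 x y hxS hyS hxy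
      exact ⟨m, hm1, hm2, fun hc => hm3 ((trans m (by omega)).mp hc),
        fun hc => hm4 ((trans (m + 1) (by omega)).mp hc),
        (trans (m - 1) (by omega)).mpr hm5, (trans (m + 2) (by omega)).mpr hm6⟩
end

section
/- In an intermediate state with N violinists (single occupancy) and g gaps between the leftmost and rightmost violinists, the number of possible moves equals N − g − 1. -/
open Classical in
/-- In a state with `N` violinists and `g` gaps, the number of possible moves
(pairs of adjacent occupied rooms) is `N - g - 1`. -/
theorem number_of_moves (S : Finset ℤ) (hS : S.Nonempty) :
    (S.filter fun i => i + 1 ∈ S).card =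
      S.card - (S.filter fun i => i + 1 ∉ S ∧ ∃ j ∈ S, i < j).card - 1 := by
  classical
  set M := S.max' hS with hM
  have hMS : M ∈ S := S.max'_mem hS
  have hM1 : M + 1 ∉ S := fun h => by have := S.le_max' _ h; omega
  have h2 : S.filter (fun i => ¬ i + 1 ∈ S) =
      insert M (S.filter fun i => i + 1 ∉ S ∧ ∃ j ∈ S, i < j) := by
    ext a
    simp only [Finset.mem_filter, Finset.mem_insert]
    constructor
    · rintro ⟨ha, hna⟩
      by_cases h : a = M
      · exact Or.inl h
      · exact Or.inr ⟨ha, hna, M, hMS, lt_of_le_of_ne (S.le_max' a ha) h⟩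
    · rintro (rfl | ⟨ha, hna, _⟩)
      · exact ⟨hMS, hM1⟩
      · exact ⟨ha, hna⟩
  have hMnot : M ∉ S.filter (fun i => i + 1 ∉ S ∧ ∃ j ∈ S, i < j) := by
    intro h
    obtain ⟨-, -, j, hj, hlt⟩ := Finset.mem_filter.mp h
    have := S.le_max' j hj
    omega
  have hcard : (S.filter fun i => ¬ i + 1 ∈ S).card =
      (S.filter fun i => i + 1 ∉ S ∧ ∃ j ∈ S, i < j).card + 1 := by
    rw [h2, Finset.card_insert_of_notMem hMnot]
  have h1 := Finset.card_filter_add_card_filter_not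
    (s := S) (p := fun i => i + 1 ∈ S)
  omega
end
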